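/- arXiv:0810.0239 — 3 statements merged into one kernel-verified Lean document; each statement's English description precedes it below -/
import Mathlib

section
/- Let μ, ν, κ, θ > 0 and let g : [0,∞) → ℝ be continuously differentiable, increasing, with g(0) > 0 and x ↦ g(x)/x decreasing on (0,∞). Let (E(t), G(t)) be the solution of the delayed system dE/dt = μ G(t) - ν E(t), dG/dt = g(E(t-θ))(1-G(t)) - κ G(t), for any initial condition with E continuous and nonnegative on [-θ,0] and G(0) ∈ [0,1]. Then the convergence to the equilibrium (E_0, G_0) is exponential: there exist constants C > 0 and λ > 0 such that |E(t) - E_0| + |G(t) - G_0| ≤ C e^{-λ t} for all t ≥ 0. -/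
open Set Filter

open Topology

noncomputable section

private lemma right_point_lt {f : ℝ → ℝ} {d u b : ℝ} {s : Set ℝ}
    (hf : HasDerivWithinAt f d s u) (hd : d < 0) (hub : u < b)
    (hsub : Ioc u b ⊆ s) :
    ∃ x ∈ Ioc u b, f x < f u := by
  have hslope := hasDerivWithinAt_iff_tendsto_slope.mp hf
  have hle : 𝓝[Ioc u b] u ≤ 𝓝[s \ {u}] u :=
    nhdsWithin_mono _ (fun x hx => ⟨hsub hx, by simpa using hx.1.ne'⟩)
  haveI : (𝓝[Ioc u b] u).NeBot := by
    rw [nhdsWithin_Ioc_eq_nhdsGT hub]; infer_instance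
  have hev : ∀ᶠ x in 𝓝[Ioc u b] u, slope f u x < 0 :=
    (hslope.mono_left hle).eventually_lt_const hd
  obtain ⟨x, hx1, hx2⟩ := (hev.and (eventually_mem_nhdsWithin)).exists
  refine ⟨x, hx2, ?_⟩
  have hxu : u < x := hx2.1
  have : f x - f u = slope f u x * (x - u) := by
    rw [slope_def_field]
    field_simp [sub_ne_zero.mpr hxu.ne']
  nlinarith [this, mul_neg_of_neg_of_pos hx1 (sub_pos.mpr hxu)]

private lemma left_point_gt {f : ℝ → ℝ} {d u a : ℝ} {s : Set ℝ}
    (hf : HasDerivWithinAt f d s u) (hd : d < 0) (hau : a < u)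
    (hsub : Ico a u ⊆ s) :
    ∃ x ∈ Ico a u, f u < f x := by
  have hslope := hasDerivWithinAt_iff_tendsto_slope.mp hf
  have hle : 𝓝[Ico a u] u ≤ 𝓝[s \ {u}] u :=
    nhdsWithin_mono _ (fun x hx => ⟨hsub hx, by simpa using hx.2.ne⟩)
  haveI : (𝓝[Ico a u] u).NeBot := by
    rw [nhdsWithin_Ico_eq_nhdsLT hau]; infer_instance
  have hev : ∀ᶠ x in 𝓝[Ico a u] u, slope f u x < 0 :=
    (hslope.mono_left hle).eventually_lt_const hd
  obtain ⟨x, hx1, hx2⟩ := (hev.and (eventually_mem_nhdsWithin)).exists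
  refine ⟨x, hx2, ?_⟩
  have hxu : x < u := hx2.2
  have : f x - f u = slope f u x * (x - u) := by
    rw [slope_def_field]
    field_simp [sub_ne_zero.mpr hxu.ne]
  nlinarith [this, mul_pos_of_neg_of_neg hx1 (sub_neg.mpr hxu)]

private lemma barrier {f d : ℝ → ℝ} {T c t₂ : ℝ} (hT : T ≤ t₂)
    (hf : ∀ t ∈ Icc T t₂, HasDerivWithinAt f (d t) (Ici T) t)
    (h0 : f T ≤ c) (hd : ∀ t ∈ Icc T t₂, f t = c → d t < 0) :
    f t₂ ≤ c := by
  by_contra hcon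
  push_neg at hcon
  have hcont : ContinuousOn f (Icc T t₂) := fun t ht =>
    ((hf t ht).continuousWithinAt).mono Icc_subset_Ici_self
  set S : Set ℝ := Icc T t₂ ∩ f ⁻¹' (Iic c) with hS
  have hne : (T : ℝ) ∈ S := ⟨⟨le_refl _, hT⟩, h0⟩
  have hbdd : BddAbove S := ⟨t₂, fun x hx => hx.1.2⟩
  set u := sSup S with hu
  have hclosed : IsClosed S := hcont.preimage_isClosed_of_isClosed isClosed_Icc isClosed_Iic
  have huS : u ∈ S := hclosed.csSup_mem ⟨T, hne⟩ hbdd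
  have hTu : T ≤ u := le_csSup hbdd hne
  have hut₂ : u ≤ t₂ := huS.1.2
  have hunt : u ≠ t₂ := by
    intro h; rw [h] at huS; exact absurd huS.2 (not_le.mpr hcon)
  have hult : u < t₂ := lt_of_le_of_ne hut₂ hunt
  -- on (u, t₂], f > c
  have hgt : ∀ s ∈ Ioc u t₂, c < f s := by
    intro s hs
    by_contra hsle
    push_neg at hsle
    exact absurd (le_csSup hbdd ⟨⟨hTu.trans hs.1.le, hs.2⟩, hsle⟩) (not_le.mpr hs.1)
  -- f u = c
  have hfu : f u = c := by
    refine le_antisymm huS.2 ?_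
    have htend : Tendsto f (𝓝[Ioc u t₂] u) (𝓝 (f u)) :=
      ((hcont u huS.1).mono (fun x hx => ⟨hTu.trans hx.1.le, hx.2⟩)).tendsto
    haveI : (𝓝[Ioc u t₂] u).NeBot := by
      rw [nhdsWithin_Ioc_eq_nhdsGT hult]; infer_instance
    exact ge_of_tendsto htend (eventually_mem_nhdsWithin.mono (fun x hx => (hgt x hx).le))
  have hdu : d u < 0 := hd u huS.1 hfu
  obtain ⟨x, hx1, hx2⟩ := right_point_lt (hf u huS.1) hdu hult
    (fun x hx => le_trans hTu hx.1.le)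
  exact absurd (hfu ▸ hx2) (not_lt.mpr (hgt x hx1).le)

private lemma comp_lower {f d : ℝ → ℝ} {T a b : ℝ} (hb : 0 < b)
    (hf : ∀ t ∈ Ici T, HasDerivWithinAt f (d t) (Ici T) t)
    (hd : ∀ t ∈ Ici T, a - b * f t ≤ d t) :
    ∀ t ∈ Ici T, a / b - f t ≤ (a / b - f T) * Real.exp (-(b * (t - T))) := by
  set u : ℝ → ℝ := fun t => (a / b - f t) * Real.exp (b * (t - T)) with hu
  have hud : ∀ t ∈ Ici T, HasDerivWithinAt u
      ((a - b * f t - d t) * Real.exp (b * (t - T))) (Ici T) t := by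
    intro t ht
    have h1 : HasDerivWithinAt (fun s => a / b - f s) (-(d t)) (Ici T) t :=
      (hf t ht).const_sub _
    have hlin : HasDerivAt (fun s : ℝ => b * (s - T)) b t := by
      simpa using ((hasDerivAt_id t).sub_const T).const_mul b
    have h2 : HasDerivAt (fun s : ℝ => Real.exp (b * (s - T)))
        (Real.exp (b * (t - T)) * b) t := hlin.exp
    have := h1.mul (h2.hasDerivWithinAt (s := Ici T))
    refine this.congr_deriv ?_
    field_simp
    ring
  have hmono : AntitoneOn u (Ici T) := by
    apply antitoneOn_of_deriv_nonpos (convex_Ici T)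
    · exact fun t ht => (hud t ht).continuousWithinAt
    · intro t ht
      rw [interior_Ici] at ht
      exact ((hud t (mem_Ici.mpr (le_of_lt ht))).hasDerivAt (Ici_mem_nhds ht)).differentiableAt.differentiableWithinAt
    · intro t ht
      rw [interior_Ici] at ht
      rw [((hud t (mem_Ici.mpr (le_of_lt ht))).hasDerivAt (Ici_mem_nhds ht)).deriv]
      have := hd t (mem_Ici.mpr (le_of_lt ht))
      nlinarith [Real.exp_pos (b * (t - T)), hd t (mem_Ici.mpr (le_of_lt ht))]
  intro t ht
  have huT : u t ≤ u T := hmono (le_refl T : T ∈ Ici T) ht ht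
  have huT' : u T = a / b - f T := by simp [hu]
  have hpos := Real.exp_pos (b * (t - T))
  have key : a / b - f t = u t * Real.exp (-(b * (t - T))) := by
    rw [hu, Real.exp_neg]
    field_simp
  rw [key, Real.exp_neg]
  rw [huT'] at huT
  exact mul_le_mul_of_nonneg_right huT (by positivity)

private lemma comp_lower_event {f d : ℝ → ℝ} {T a b : ℝ} (hb : 0 < b)
    (hf : ∀ t ∈ Ici T, HasDerivWithinAt f (d t) (Ici T) t)
    (hd : ∀ t ∈ Ici T, a - b * f t ≤ d t) :
    ∀ ε > 0, ∃ T', T ≤ T' ∧ ∀ t, T' ≤ t → a / b - ε ≤ f t := by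
  intro ε hε
  set c := |a / b - f T| + 1 with hc
  have hcpos : 0 < c := by positivity
  refine ⟨T + max 0 (Real.log (c / ε) / b), le_add_of_nonneg_right (le_max_left _ _), ?_⟩
  intro t ht
  have htT : T ≤ t := le_trans (le_add_of_nonneg_right (le_max_left _ _)) ht
  have hbase := comp_lower hb hf hd t htT
  have hexp1 : Real.log (c / ε) ≤ b * (t - T) := by
    have h1 : Real.log (c / ε) / b ≤ max 0 (Real.log (c / ε) / b) := le_max_right _ _
    have h2 : max 0 (Real.log (c / ε) / b) ≤ t - T := by linarith
    calc Real.log (c / ε) = Real.log (c / ε) / b * b := by field_simp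
    _ ≤ (t - T) * b := mul_le_mul_of_nonneg_right (h1.trans h2) hb.le
    _ = b * (t - T) := by ring
  have hexp2 : c / ε ≤ Real.exp (b * (t - T)) := by
    calc c / ε = Real.exp (Real.log (c / ε)) := (Real.exp_log (by positivity)).symm
    _ ≤ Real.exp (b * (t - T)) := Real.exp_le_exp.mpr hexp1
  have hpos := Real.exp_pos (b * (t - T))
  have key : c * Real.exp (-(b * (t - T))) ≤ ε := by
    rw [Real.exp_neg]
    rw [div_le_iff₀ hε] at hexp2
    calc c * (Real.exp (b * (t - T)))⁻¹ ≤ Real.exp (b * (t - T)) * ε * (Real.exp (b * (t - T)))⁻¹ :=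
      mul_le_mul_of_nonneg_right hexp2 (by positivity)
    _ = ε := by field_simp
  have h3 : (a / b - f T) * Real.exp (-(b * (t - T))) ≤ c * Real.exp (-(b * (t - T))) :=
    mul_le_mul_of_nonneg_right (by rw [hc]; nlinarith [le_abs_self (a / b - f T)]) (by positivity)
  have hfin : a / b - f t ≤ ε := le_trans hbase (le_trans h3 key)
  linarith [hfin]

private lemma glip {g : ℝ → ℝ} (hgmono : MonotoneOn g (Ici 0))
    (hgdec : AntitoneOn (fun x : ℝ => g x / x) (Ioi 0)) {m x y : ℝ}
    (hm : 0 < m) (hx : m ≤ x) (hy : m ≤ y) :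
    |g x - g y| ≤ g m / m * |x - y| := by
  have key : ∀ x y : ℝ, m ≤ x → x ≤ y → g y - g x ≤ g m / m * (y - x) ∧ 0 ≤ g y - g x := by
    intro x y hx1 hxy
    have hx0 : (0:ℝ) < x := lt_of_lt_of_le hm hx1
    have hy0 : (0:ℝ) < y := lt_of_lt_of_le hx0 hxy
    have hmono := hgmono (le_of_lt hx0 : x ∈ Ici 0) (le_of_lt hy0 : y ∈ Ici 0) hxy
    refine ⟨?_, by linarith⟩
    have h1 : g y / y ≤ g x / x := hgdec (mem_Ioi.mpr hx0) (mem_Ioi.mpr hy0) hxy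
    have h2 : g x / x ≤ g m / m := hgdec (mem_Ioi.mpr hm) (mem_Ioi.mpr hx0) hx1
    have h3 : g y ≤ g x / x * y := by
      rw [div_le_iff₀ hy0] at h1; linarith
    have h4 : g y - g x ≤ g x / x * (y - x) := by
      have : g x / x * x = g x := by field_simp
      nlinarith
    calc g y - g x ≤ g x / x * (y - x) := h4
    _ ≤ g m / m * (y - x) := mul_le_mul_of_nonneg_right h2 (by linarith)
  rcases le_total x y with hxy | hxy
  · obtain ⟨h1, h2⟩ := key x y hx hxy
    rw [abs_of_nonpos (by linarith), abs_of_nonpos (by linarith)]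
    linarith
  · obtain ⟨h1, h2⟩ := key y x hy hxy
    rw [abs_of_nonneg (by linarith), abs_of_nonneg (by linarith)]
    linarith

set_option maxHeartbeats 1000000 in
private lemma halanay {e h q : ℝ → ℝ} {T₀ θ μ ν κ' c w lam K : ℝ}
    (hθ : 0 < θ) (hμ : 0 < μ) (hν : 0 < ν)
    (hw : 0 < w) (hlam : 0 < lam) (hc : 0 ≤ c)
    (hcond1 : μ * w + lam < ν)
    (hcond2 : c * Real.exp (lam * θ) + lam * w < κ' * w)
    (hK : 0 < K)
    (hde : ∀ t ∈ Ici T₀, HasDerivWithinAt e (μ * h t - ν * e t) (Ici T₀) t)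
    (hdh : ∀ t ∈ Ici T₀, HasDerivWithinAt h (q t - κ' * h t) (Ici T₀) t)
    (hq : ∀ t ∈ Ici T₀, |q t| ≤ c * |e (t - θ)|)
    (hist : ∀ s ∈ Icc (T₀ - θ) T₀, |e s| ≤ K ∧ |h s| ≤ w * K) :
    ∀ t ∈ Ici T₀, |e t| ≤ 2 * K * Real.exp (-(lam * (t - T₀))) ∧
      |h t| ≤ w * (2 * K * Real.exp (-(lam * (t - T₀)))) := by
  set B : ℝ → ℝ := fun t => 2 * K * Real.exp (-(lam * (t - T₀))) with hBdef
  have hBpos : ∀ t, 0 < B t := fun t => by positivity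
  have hB : ∀ t : ℝ, HasDerivAt B (-(lam * B t)) t := by
    intro t
    have hlin : HasDerivAt (fun s : ℝ => -(lam * (s - T₀))) (-lam) t := by
      simpa using (((hasDerivAt_id t).sub_const T₀).const_mul lam).fun_neg
    have := (hlin.exp).const_mul (2 * K)
    refine this.congr_deriv ?_
    simp [hBdef]; ring
  have hBT₀ : B T₀ = 2 * K := by simp [hBdef]
  -- continuity
  have hecont : ContinuousOn e (Ici T₀) := fun t ht => (hde t ht).continuousWithinAt
  have hhcont : ContinuousOn h (Ici T₀) := fun t ht => (hdh t ht).continuousWithinAt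
  have hBcont : Continuous B := by
    apply Continuous.mul continuous_const
    exact Real.continuous_exp.comp (by continuity)
  by_contra hcon
  push_neg at hcon
  obtain ⟨t₂, ht₂, hbad⟩ := hcon
  set S : Set ℝ := {t ∈ Icc T₀ t₂ | ∀ s ∈ Icc T₀ t, |e s| ≤ B s ∧ |h s| ≤ w * B s} with hS
  have hT₂T₀ : T₀ ≤ t₂ := ht₂
  have histT₀ := hist T₀ ⟨by linarith, le_refl _⟩
  have hT₀S : T₀ ∈ S := by
    refine ⟨⟨le_refl _, hT₂T₀⟩, ?_⟩
    intro s hs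
    have : s = T₀ := le_antisymm hs.2 hs.1
    subst this
    rw [hBT₀]
    constructor
    · linarith [histT₀.1]
    · nlinarith [histT₀.2]
  have hbddS : BddAbove S := ⟨t₂, fun x hx => hx.1.2⟩
  set u := sSup S with hu
  have hT₀u : T₀ ≤ u := le_csSup hbddS hT₀S
  have hut₂ : u ≤ t₂ := csSup_le ⟨T₀, hT₀S⟩ fun x hx => hx.1.2
  -- conditions hold strictly before u
  have hbefore : ∀ s ∈ Ico T₀ u, |e s| ≤ B s ∧ |h s| ≤ w * B s := by
    intro s hs
    obtain ⟨t', ht'S, hst'⟩ := (lt_csSup_iff hbddS ⟨T₀, hT₀S⟩).mp hs.2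
    exact ht'S.2 s ⟨hs.1, hst'.le⟩
  -- conditions hold at u
  have hatu : |e u| ≤ B u ∧ |h u| ≤ w * B u := by
    rcases eq_or_lt_of_le hT₀u with heq | hlt
    · rw [← heq]; exact hT₀S.2 T₀ ⟨le_refl _, le_refl _⟩
    · haveI : (𝓝[Ico T₀ u] u).NeBot := by
        rw [nhdsWithin_Ico_eq_nhdsLT hlt]; infer_instance
      have hmem : ∀ᶠ x in 𝓝[Ico T₀ u] u, x ∈ Ico T₀ u := eventually_mem_nhdsWithin
      have hsub : Ico T₀ u ⊆ Ici T₀ := fun x hx => hx.1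
      have hte : Tendsto (fun x => |e x| - B x) (𝓝[Ico T₀ u] u) (𝓝 (|e u| - B u)) :=
        (((hecont u (le_of_lt hlt)).mono hsub).tendsto.abs).sub
          ((hBcont.tendsto u).mono_left nhdsWithin_le_nhds)
      have hth : Tendsto (fun x => |h x| - w * B x) (𝓝[Ico T₀ u] u) (𝓝 (|h u| - w * B u)) :=
        (((hhcont u (le_of_lt hlt)).mono hsub).tendsto.abs).sub
          ((((continuous_const.mul hBcont)).tendsto u).mono_left nhdsWithin_le_nhds)
      constructor
      · have := le_of_tendsto hte (hmem.mono fun x hx => sub_nonpos.mpr (hbefore x hx).1)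
        linarith
      · have := le_of_tendsto hth (hmem.mono fun x hx => sub_nonpos.mpr (hbefore x hx).2)
        linarith
  have huS : u ∈ S := by
    refine ⟨⟨hT₀u, hut₂⟩, ?_⟩
    intro s hs
    rcases eq_or_lt_of_le hs.2 with heq | hlt
    · subst heq; exact hatu
    · exact hbefore s ⟨hs.1, hlt⟩
  have hult₂ : u < t₂ := by
    rcases eq_or_lt_of_le hut₂ with heq | hlt
    · exfalso
      rw [heq] at hatu
      exact absurd hatu.2 (not_le.mpr (hbad hatu.1))
    · exact hlt
  -- crossing machinery
  have crossing : ∀ (ψ : ℝ → ℝ) (D : ℝ), HasDerivWithinAt ψ D (Ici T₀) u → D < 0 →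
      (∀ s ∈ Icc T₀ u, ψ s ≤ 0) → ψ u = 0 → T₀ < u → False := by
    intro ψ D hψ hD hψle hψu hT₀lt
    obtain ⟨x, hx1, hx2⟩ := left_point_gt hψ hD hT₀lt (fun x hx => hx.1)
    rw [hψu] at hx2
    exact absurd (hψle x ⟨hx1.1, hx1.2.le⟩) (not_le.mpr hx2)
  -- not all strict at u
  have hstrict : |e u| = B u ∨ |h u| = w * B u := by
    by_contra hall
    push_neg at hall
    have he_lt : |e u| < B u := lt_of_le_of_ne hatu.1 hall.1
    have hh_lt : |h u| < w * B u := lt_of_le_of_ne hatu.2 hall.2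
    -- extend beyond u
    have hcontu : Tendsto (fun x => max (|e x| - B x) (|h x| - w * B x)) (𝓝[Ici T₀] u)
        (𝓝 (max (|e u| - B u) (|h u| - w * B u))) :=
      Tendsto.max
        (((hecont u hT₀u).tendsto.abs).sub ((hBcont.tendsto u).mono_left nhdsWithin_le_nhds))
        (((hhcont u hT₀u).tendsto.abs).sub
          (((continuous_const.mul hBcont).tendsto u).mono_left nhdsWithin_le_nhds))
    have hneg : max (|e u| - B u) (|h u| - w * B u) < 0 := by
      apply max_lt <;> linarith
    have hev : ∀ᶠ x in 𝓝[Ici T₀] u, max (|e x| - B x) (|h x| - w * B x) < 0 :=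
      hcontu.eventually_lt_const hneg
    rw [eventually_nhdsWithin_iff] at hev
    obtain ⟨ε, hε, hball⟩ := Metric.eventually_nhds_iff_ball.mp hev
    set t₃ := min (u + ε / 2) t₂ with ht₃
    have ht₃u : u < t₃ := lt_min (by linarith) hult₂
    have ht₃S : t₃ ∈ S := by
      refine ⟨⟨hT₀u.trans ht₃u.le, min_le_right _ _⟩, ?_⟩
      intro s hs
      rcases le_or_gt s u with hsu | hsu
      · exact huS.2 s ⟨hs.1, hsu⟩
      · have hsball : s ∈ Metric.ball u ε := by
          rw [Metric.mem_ball, Real.dist_eq, abs_of_pos (by linarith)]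
          have : s ≤ u + ε / 2 := hs.2.trans (min_le_left _ _)
          linarith
        have := hball s hsball hs.1
        constructor
        · nlinarith [le_max_left (|e s| - B s) (|h s| - w * B s)]
        · nlinarith [le_max_right (|e s| - B s) (|h s| - w * B s)]
    exact absurd (le_csSup hbddS ht₃S) (not_le.mpr ht₃u)
  -- u > T₀ in all equality cases
  have hT₀lt : T₀ < u := by
    rcases eq_or_lt_of_le hT₀u with heq | hlt
    · exfalso
      rcases hstrict with h1 | h1 <;> rw [← heq] at h1 <;> rw [hBT₀] at h1
      · linarith [histT₀.1]
      · nlinarith [histT₀.2]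
    · exact hlt
  have huIci : u ∈ Ici T₀ := hT₀u
  have hhu_le : |h u| ≤ w * B u := hatu.2
  have heu_le : |e u| ≤ B u := hatu.1
  -- the delayed bound
  have hdelay : |e (u - θ)| ≤ B u * Real.exp (lam * θ) := by
    have hBform : B u * Real.exp (lam * θ) = 2 * K * Real.exp (-(lam * (u - θ - T₀))) := by
      rw [hBdef]
      simp only []
      rw [mul_assoc, ← Real.exp_add]
      ring_nf
    rw [hBform]
    rcases le_or_gt T₀ (u - θ) with hcase | hcase
    · have := huS.2 (u - θ) ⟨hcase, by linarith⟩
      exact this.1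
    · have := (hist (u - θ) ⟨by linarith, hcase.le⟩).1
      have hexp : (1 : ℝ) ≤ Real.exp (-(lam * (u - θ - T₀))) := by
        rw [Real.one_le_exp_iff]
        nlinarith
      nlinarith
  have hqu : |q u| ≤ c * (B u * Real.exp (lam * θ)) := by
    have := hq u huIci
    have := mul_le_mul_of_nonneg_left hdelay hc
    linarith
  -- four cases
  rcases hstrict with habs | habs
  · rcases abs_eq (le_of_lt (hBpos u)) |>.mp habs with hcase | hcase
    · -- e u = B u
      have hψd : HasDerivWithinAt (fun s => e s - B s)
          ((μ * h u - ν * e u) - (-(lam * B u))) (Ici T₀) u :=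
        (hde u huIci).sub ((hB u).hasDerivWithinAt)
      refine crossing _ _ hψd ?_ ?_ (by simp [hcase]) hT₀lt
      · have : h u ≤ w * B u := (abs_le.mp hhu_le).2
        nlinarith [hBpos u]
      · intro s hs
        have h2 := (abs_le.mp (huS.2 s hs).1).2
        show e s - B s ≤ 0
        linarith
    · -- e u = -B u
      have hψd : HasDerivWithinAt (fun s => -e s - B s)
          (-(μ * h u - ν * e u) - (-(lam * B u))) (Ici T₀) u :=
        ((hde u huIci).neg).sub ((hB u).hasDerivWithinAt)
      refine crossing _ _ hψd ?_ ?_ (by simp [hcase]) hT₀lt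
      · have : -(w * B u) ≤ h u := (abs_le.mp hhu_le).1
        nlinarith [hBpos u]
      · intro s hs
        have h2 := (abs_le.mp (huS.2 s hs).1).1
        show -e s - B s ≤ 0
        linarith
  · rcases abs_eq (by positivity : (0:ℝ) ≤ w * B u) |>.mp habs with hcase | hcase
    · -- h u = w * B u
      have hψd : HasDerivWithinAt (fun s => h s - w * B s)
          ((q u - κ' * h u) - w * (-(lam * B u))) (Ici T₀) u :=
        (hdh u huIci).sub (((hB u).const_mul w).hasDerivWithinAt)
      refine crossing _ _ hψd ?_ ?_ (by simp [hcase]) hT₀lt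
      · have h1 : q u ≤ c * (B u * Real.exp (lam * θ)) := (abs_le.mp hqu).2
        have h3 : κ' * h u = κ' * (w * B u) := by rw [hcase]
        nlinarith [hBpos u, mul_lt_mul_of_pos_left hcond2 (hBpos u)]
      · intro s hs
        have h2 := (abs_le.mp (huS.2 s hs).2).2
        show h s - w * B s ≤ 0
        linarith
    · -- h u = -(w * B u)
      have hψd : HasDerivWithinAt (fun s => -h s - w * B s)
          (-(q u - κ' * h u) - w * (-(lam * B u))) (Ici T₀) u :=
        ((hdh u huIci).neg).sub (((hB u).const_mul w).hasDerivWithinAt)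
      refine crossing _ _ hψd ?_ ?_ (by simp [hcase]) hT₀lt
      · have h1 : -(c * (B u * Real.exp (lam * θ))) ≤ q u := (abs_le.mp hqu).1
        have h3 : κ' * h u = κ' * -(w * B u) := by rw [hcase]
        nlinarith [hBpos u, mul_lt_mul_of_pos_left hcond2 (hBpos u)]
      · intro s hs
        have h2 := (abs_le.mp (huS.2 s hs).2).1
        show -h s - w * B s ≤ 0
        linarith

/-- `(E, G)` is a solution on `[0,∞)` of the delayed mean-field system
`dE/dt = μG(t) - νE(t)`, `dG/dt = g(E(t-θ))(1-G(t)) - κG(t)`, with initial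
history `E = E₀` on `[-θ,0]` and initial value `G(0) = G₀`. -/
def IsDelaySolution (μ ν κ θ : ℝ) (g : ℝ → ℝ) (E₀ : ℝ → ℝ) (G₀ : ℝ)
    (E G : ℝ → ℝ) : Prop :=
  (∀ t ∈ Icc (-θ) (0 : ℝ), E t = E₀ t) ∧
  G 0 = G₀ ∧
  (∀ t ∈ Ici (0 : ℝ), HasDerivWithinAt E (μ * G t - ν * E t) (Ici 0) t) ∧
  (∀ t ∈ Ici (0 : ℝ),
    HasDerivWithinAt G (g (E (t - θ)) * (1 - G t) - κ * G t) (Ici 0) t)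

set_option maxHeartbeats 1000000 in
/-- Lemma `expconvergence`: the convergence of any solution of
the delayed system to the equilibrium `(Eeq, Geq)` is exponential: there exist
`C > 0` and `λ > 0` with `|E(t) - Eeq| + |G(t) - Geq| ≤ C e^{-λt}` for `t ≥ 0`. -/
theorem delay_system_exponential_convergence
    (μ ν κ θ : ℝ) (hμ : 0 < μ) (hν : 0 < ν) (hκ : 0 < κ) (hθ : 0 < θ)
    (g : ℝ → ℝ) (hgC1 : ContDiffOn ℝ 1 g (Ici 0)) (hgmono : MonotoneOn g (Ici 0))
    (hg0 : 0 < g 0) (hgdec : AntitoneOn (fun x : ℝ => g x / x) (Ioi 0))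
    (Eeq Geq : ℝ) (hEeq : 0 < Eeq) (hGeq : 0 < Geq ∧ Geq < 1)
    (heq1 : 0 = μ * Geq - ν * Eeq) (heq2 : 0 = g Eeq * (1 - Geq) - κ * Geq)
    (E₀ : ℝ → ℝ) (hE₀cont : ContinuousOn E₀ (Icc (-θ) 0))
    (hE₀pos : ∀ t ∈ Icc (-θ) (0 : ℝ), 0 ≤ E₀ t)
    (G₀ : ℝ) (hG₀ : G₀ ∈ Icc (0 : ℝ) 1)
    (E G : ℝ → ℝ) (hsol : IsDelaySolution μ ν κ θ g E₀ G₀ E G) :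
    ∃ C L : ℝ, 0 < C ∧ 0 < L ∧
      ∀ t : ℝ, 0 ≤ t →
        |E t - Eeq| + |G t - Geq| ≤ C * Real.exp (-L * t) := by
  obtain ⟨hhist, hG0, hE', hG'⟩ := hsol
  have hgcont : ContinuousOn g (Ici 0) := hgC1.continuousOn
  have hgpos : ∀ m : ℝ, 0 ≤ m → 0 < g m := fun m hm =>
    lt_of_lt_of_le hg0 (hgmono self_mem_Ici hm hm)
  -- G ≤ 1 on [0,∞)
  have hGle1 : ∀ t, (0:ℝ) ≤ t → G t ≤ 1 := by
    intro t ht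
    refine barrier (T := 0) (c := 1)
      (d := fun s => g (E (s - θ)) * (1 - G s) - κ * G s) ht
      (fun s hs => hG' s hs.1) (by rw [hG0]; exact hG₀.2) ?_
    intro s hs hGs
    show g (E (s - θ)) * (1 - G s) - κ * G s < 0
    rw [hGs]
    linarith
  -- nonnegativity of E and G, by induction on delay intervals
  have hEG : ∀ n : ℕ, ∀ t, t ∈ Icc (0:ℝ) (n * θ) → 0 ≤ E t ∧ 0 ≤ G t := by
    intro n
    induction n with
    | zero =>
      intro t ht
      simp only [Nat.cast_zero, zero_mul] at ht
      have ht0 : t = 0 := le_antisymm ht.2 ht.1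
      subst ht0
      constructor
      · rw [hhist 0 ⟨by linarith, le_refl 0⟩]; exact hE₀pos 0 ⟨by linarith, le_refl 0⟩
      · rw [hG0]; exact hG₀.1
    | succ n ih =>
      have hcast : ((n + 1 : ℕ) : ℝ) * θ = (n : ℝ) * θ + θ := by push_cast; ring
      have hEhist : ∀ s : ℝ, -θ ≤ s → s ≤ (n:ℝ) * θ → 0 ≤ E s := by
        intro s hs1 hs2
        rcases le_or_gt s 0 with h0 | h0
        · rw [hhist s ⟨hs1, h0⟩]; exact hE₀pos s ⟨hs1, h0⟩
        · exact (ih s ⟨h0.le, hs2⟩).1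
      have hGpos' : ∀ t, t ∈ Icc (0:ℝ) (((n+1 : ℕ) : ℝ) * θ) → 0 ≤ G t := by
        intro t ht
        have hbar := barrier (T := (0:ℝ)) (c := (0:ℝ)) (t₂ := t)
          (f := fun s => -G s)
          (d := fun s => -(g (E (s - θ)) * (1 - G s) - κ * G s)) ht.1
          (fun s hs => (hG' s hs.1).neg)
          (by show -G 0 ≤ 0; rw [hG0]; linarith [hG₀.1]) ?_
        · have hbar' : -G t ≤ 0 := hbar
          linarith
        · intro s hs hGs
          have hGs0 : G s = 0 := by
            have : -G s = 0 := hGs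
            linarith
          have hp : 0 < g (E (s - θ)) := by
            apply hgpos
            apply hEhist (s - θ) (by linarith [hs.1])
            rw [hcast] at ht
            linarith [hs.2, ht.2]
          show -(g (E (s - θ)) * (1 - G s) - κ * G s) < 0
          rw [hGs0]
          linarith
      intro t ht
      refine ⟨?_, hGpos' t ht⟩
      have hEeps : ∀ ε : ℝ, 0 < ε → -E t ≤ ε := by
        intro ε hε
        refine barrier (T := (0:ℝ)) (c := ε) (t₂ := t) (f := fun s => -E s)
          (d := fun s => -(μ * G s - ν * E s)) ht.1
          (fun s hs => (hE' s hs.1).neg) ?_ ?_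
        · have h00 : E 0 = E₀ 0 := hhist 0 ⟨by linarith, le_refl 0⟩
          have h01 := hE₀pos 0 ⟨by linarith, le_refl 0⟩
          show -E 0 ≤ ε
          rw [h00]
          linarith
        · intro s hs hEs
          have hGs : 0 ≤ G s := hGpos' s ⟨hs.1, hs.2.trans ht.2⟩
          have hEs' : E s = -ε := by
            have : -E s = ε := hEs
            linarith
          show -(μ * G s - ν * E s) < 0
          rw [hEs']
          linarith [mul_pos hν hε, mul_nonneg hμ.le hGs]
      by_contra hcon
      push_neg at hcon
      have := hEeps (-E t / 2) (by linarith)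
      linarith
  have hEpos : ∀ t : ℝ, 0 ≤ t → 0 ≤ E t := by
    intro t ht
    obtain ⟨n, hn⟩ := exists_nat_gt (t / θ)
    have : t ≤ (n:ℝ) * θ := by
      rw [div_lt_iff₀ hθ] at hn; linarith
    exact (hEG n t ⟨ht, this⟩).1
  have hGpos : ∀ t : ℝ, 0 ≤ t → 0 ≤ G t := by
    intro t ht
    obtain ⟨n, hn⟩ := exists_nat_gt (t / θ)
    have : t ≤ (n:ℝ) * θ := by
      rw [div_lt_iff₀ hθ] at hn; linarith
    exact (hEG n t ⟨ht, this⟩).2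
  have hEcont : ContinuousOn E (Ici 0) := fun t ht => (hE' t ht).continuousWithinAt
  have hGcont : ContinuousOn G (Ici 0) := fun t ht => (hG' t ht).continuousWithinAt
  -- the interval map F
  set F : ℝ → ℝ := fun m => μ * (g m / (g m + κ)) / ν with hF
  have hgκ : ∀ m : ℝ, 0 ≤ m → 0 < g m + κ := fun m hm => by linarith [hgpos m hm]
  have hFpos : ∀ m : ℝ, 0 ≤ m → 0 < F m := by
    intro m hm
    have h1 := hgpos m hm
    have h2 := hgκ m hm
    rw [hF]
    positivity
  have hFmono : ∀ x y : ℝ, 0 ≤ x → x ≤ y → F x ≤ F y := by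
    intro x y hx hxy
    have hgx := hgpos x hx
    have hgy := hgpos y (hx.trans hxy)
    have hgxy := hgmono hx (hx.trans hxy) hxy
    have h1 : g x / (g x + κ) ≤ g y / (g y + κ) := by
      rw [div_le_div_iff₀ (by linarith) (by linarith)]
      linarith [mul_le_mul_of_nonneg_left hgxy hκ.le]
    show μ * (g x / (g x + κ)) / ν ≤ μ * (g y / (g y + κ)) / ν
    gcongr
  have hGeqval : Geq = g Eeq / (g Eeq + κ) := by
    have hgE := hgpos Eeq hEeq.le
    rw [eq_div_iff (by linarith : g Eeq + κ ≠ 0)]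
    linarith [heq2]
  have hFEeq : F Eeq = Eeq := by
    rw [hF]
    simp only
    rw [← hGeqval]
    field_simp
    linarith [heq1]
  have hratio : ∀ x y : ℝ, 0 < x → x < y → F y * x < F x * y := by
    intro x y hx hxy
    have hy : (0:ℝ) < y := hx.trans hxy
    have hgx := hgpos x hx.le
    have hgy := hgpos y hy.le
    have hmonoxy := hgmono hx.le hy.le hxy.le
    have hdec := hgdec (mem_Ioi.mpr hx) (mem_Ioi.mpr hy) hxy.le
    have hdec' : g y * x ≤ g x * y := by
      rw [div_le_div_iff₀ hy hx] at hdec; linarith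
    have core : g y * x * (g x + κ) < g x * y * (g y + κ) := by
      have c1 : g x * g y * x < g x * g y * y :=
        mul_lt_mul_of_pos_left hxy (mul_pos hgx hgy)
      have c2 : κ * (g y * x) ≤ κ * (g x * y) := mul_le_mul_of_nonneg_left hdec' hκ.le
      nlinarith [c1, c2]
    have h2 : g y / (g y + κ) * x < g x / (g x + κ) * y := by
      rw [div_mul_eq_mul_div, div_mul_eq_mul_div,
        div_lt_div_iff₀ (by linarith) (by linarith)]
      linarith [core]
    have h3 : F y * x = μ * (g y / (g y + κ) * x) / ν := by rw [hF]; ring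
    have h4 : F x * y = μ * (g x / (g x + κ) * y) / ν := by rw [hF]; ring
    rw [h3, h4]
    gcongr
  have hFge : ∀ x : ℝ, 0 ≤ x → x ≤ Eeq → x ≤ F x := by
    intro x hx hxE
    rcases eq_or_lt_of_le hx with h0 | h0
    · rw [← h0]; exact (hFpos 0 le_rfl).le
    rcases eq_or_lt_of_le hxE with hE | hE
    · rw [hE, hFEeq]
    · have hr := hratio x Eeq h0 hE
      rw [hFEeq] at hr
      have := lt_of_mul_lt_mul_right (a := Eeq) (by linarith [hr] : x * Eeq < F x * Eeq) hEeq.le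
      exact this.le
  -- the iterates
  set msq : ℕ → ℝ := fun n => F^[n] 0 with hmsq
  have hmsq0 : msq 0 = 0 := rfl
  have hmsq_succ : ∀ n, msq (n + 1) = F (msq n) := by
    intro n
    rw [hmsq]
    simp [Function.iterate_succ_apply']
  have hmsq_mem : ∀ n, 0 ≤ msq n ∧ msq n ≤ Eeq := by
    intro n
    induction n with
    | zero => rw [hmsq0]; exact ⟨le_refl 0, hEeq.le⟩
    | succ n ih =>
      rw [hmsq_succ]
      refine ⟨(hFpos _ ih.1).le, ?_⟩
      rw [← hFEeq]
      exact hFmono _ _ ih.1 ih.2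
  have hmsq_mono : Monotone msq := by
    apply monotone_nat_of_le_succ
    intro n
    rw [hmsq_succ]
    exact hFge _ (hmsq_mem n).1 (hmsq_mem n).2
  have hbddm : BddAbove (range msq) := ⟨Eeq, by rintro _ ⟨n, rfl⟩; exact (hmsq_mem n).2⟩
  set l := ⨆ n, msq n with hl
  have htendsto : Tendsto msq atTop (𝓝 l) := tendsto_atTop_ciSup hmsq_mono hbddm
  have hl1 : msq 1 ≤ l := le_ciSup hbddm 1
  have hmsq1 : msq 1 = F 0 := by rw [hmsq_succ 0, hmsq0]
  have hl_pos : 0 < l := by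
    rw [hmsq1] at hl1
    linarith [hFpos 0 le_rfl]
  have hl_le : l ≤ Eeq := ciSup_le fun n => (hmsq_mem n).2
  have hFcont : ∀ m : ℝ, 0 ≤ m → ContinuousWithinAt F (Ici 0) m := by
    intro m hm
    have h1 : ContinuousWithinAt g (Ici 0) m := hgcont m hm
    have h2 : ContinuousWithinAt (fun x => g x + κ) (Ici 0) m := h1.add continuousWithinAt_const
    have h3 : ContinuousWithinAt (fun x => g x / (g x + κ)) (Ici 0) m :=
      h1.div h2 (ne_of_gt (hgκ m hm))
    exact (continuousWithinAt_const.mul h3).div_const ν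
  have hFl : F l = l := by
    have h1 : Tendsto (fun n => msq (n + 1)) atTop (𝓝 l) :=
      htendsto.comp (tendsto_add_atTop_nat 1)
    have h2 : Tendsto (fun n => F (msq n)) atTop (𝓝 (F l)) := by
      apply (hFcont l hl_pos.le).tendsto.comp
      rw [tendsto_nhdsWithin_iff]
      exact ⟨htendsto, Eventually.of_forall fun n => (hmsq_mem n).1⟩
    have h3 : (fun n => msq (n + 1)) = fun n => F (msq n) := funext hmsq_succ
    rw [h3] at h1
    exact tendsto_nhds_unique h2 h1
  have hlEeq : l = Eeq := by
    rcases eq_or_lt_of_le hl_le with h | h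
    · exact h
    · exfalso
      have hr := hratio l Eeq hl_pos h
      rw [hFEeq, hFl] at hr
      rw [mul_comm] at hr
      exact lt_irrefl _ hr
  -- generic rounds
  have hGround : ∀ m T1 : ℝ, 0 ≤ m → 0 ≤ T1 → (∀ t, T1 ≤ t → m ≤ E t) →
      ∀ ε : ℝ, 0 < ε → ∃ T2, T1 + θ ≤ T2 ∧ ∀ t, T2 ≤ t → g m / (g m + κ) - ε ≤ G t := by
    intro m T1 hm hT1 hEm ε hε
    have hb := hgκ m hm
    have hd : ∀ t ∈ Ici (T1 + θ), g m - (g m + κ) * G t ≤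
        g (E (t - θ)) * (1 - G t) - κ * G t := by
      intro t ht
      have ht' : T1 + θ ≤ t := ht
      have ht0 : (0:ℝ) ≤ t := by linarith
      have hEd : m ≤ E (t - θ) := hEm (t - θ) (by linarith)
      have hg1 : g m ≤ g (E (t - θ)) := hgmono hm (hm.trans hEd) hEd
      have hG1 : G t ≤ 1 := hGle1 t ht0
      linarith [mul_nonneg (sub_nonneg.mpr hg1) (sub_nonneg.mpr hG1)]
    obtain ⟨T2, hT2, hbound⟩ := comp_lower_event (T := T1 + θ) (a := g m) (b := g m + κ) hb
      (fun t ht => (hG' t (by simp only [mem_Ici] at ht ⊢; linarith)).mono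
        (Ici_subset_Ici.mpr (by linarith))) hd ε hε
    exact ⟨T2, hT2, hbound⟩
  have hEround : ∀ γ T1 : ℝ, 0 ≤ T1 → (∀ t, T1 ≤ t → γ ≤ G t) →
      ∀ ε : ℝ, 0 < ε → ∃ T2, T1 ≤ T2 ∧ ∀ t, T2 ≤ t → μ * γ / ν - ε ≤ E t := by
    intro γ T1 hT1 hGγ ε hε
    have hd : ∀ t ∈ Ici T1, μ * γ - ν * E t ≤ μ * G t - ν * E t := by
      intro t ht
      have := mul_le_mul_of_nonneg_left (hGγ t ht) hμ.le
      linarith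
    exact comp_lower_event (T := T1) (a := μ * γ) (b := ν) hν
      (fun t ht => (hE' t (by simp only [mem_Ici] at ht ⊢; linarith)).mono
        (Ici_subset_Ici.mpr hT1)) hd ε hε
  -- iteration: eventual lower bounds approaching msq n
  have hQ : ∀ n : ℕ, ∀ ε : ℝ, 0 < ε → ∃ T, θ ≤ T ∧ ∀ t, T ≤ t → msq n - ε ≤ E t := by
    intro n
    induction n with
    | zero =>
      intro ε hε
      refine ⟨θ, le_refl θ, fun t ht => ?_⟩
      have := hEpos t (le_trans hθ.le ht)
      rw [hmsq0]
      linarith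
    | succ n ih =>
      intro ε hε
      have hm0 : 0 ≤ msq n := (hmsq_mem n).1
      obtain ⟨δ, hδ, hFδ⟩ := Metric.continuousWithinAt_iff.mp (hFcont (msq n) hm0) (ε / 4)
        (by positivity)
      obtain ⟨T1, hT1, hE1⟩ := ih (δ / 2) (by positivity)
      set m' := max (msq n - δ / 2) 0 with hm'
      have hm'0 : 0 ≤ m' := le_max_right _ _
      have hm'dist : dist m' (msq n) < δ := by
        rw [Real.dist_eq, abs_lt]
        constructor
        · linarith [le_max_left (msq n - δ / 2) 0]
        · have : m' ≤ msq n := max_le (by linarith) hm0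
          linarith
      have hFm' : F (msq n) - ε / 4 < F m' := by
        have := hFδ hm'0 hm'dist
        rw [Real.dist_eq, abs_lt] at this
        linarith [this.1]
      have hEm' : ∀ t, T1 ≤ t → m' ≤ E t := by
        intro t ht
        apply max_le
        · linarith [hE1 t ht]
        · exact hEpos t (le_trans (le_trans hθ.le hT1) ht)
      have hT10 : (0:ℝ) ≤ T1 := le_trans hθ.le hT1
      obtain ⟨T2, hT2, hG2⟩ := hGround m' T1 hm'0 hT10 hEm' (ε / 4 * (ν / μ)) (by positivity)
      have hT20 : (0:ℝ) ≤ T2 := by linarith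
      obtain ⟨T3, hT3, hE3⟩ := hEround (g m' / (g m' + κ) - ε / 4 * (ν / μ)) T2 hT20 hG2
        (ε / 4) (by positivity)
      refine ⟨max T3 θ, le_max_right _ _, ?_⟩
      intro t ht
      have ht3 : T3 ≤ t := le_trans (le_max_left _ _) ht
      have hfin := hE3 t ht3
      have harith : μ * (g m' / (g m' + κ) - ε / 4 * (ν / μ)) / ν = F m' - ε / 4 := by
        show _ = μ * (g m' / (g m' + κ)) / ν - ε / 4
        have hB : g m' + κ ≠ 0 := ne_of_gt (hgκ m' hm'0)
        field_simp
      rw [harith] at hfin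
      rw [hmsq_succ]
      linarith
  have hElower : ∀ δ : ℝ, 0 < δ → ∃ T, θ ≤ T ∧ ∀ t, T ≤ t → Eeq - δ ≤ E t := by
    intro δ hδ
    have hex : ∃ n, Eeq - δ / 2 < msq n := by
      by_contra hno
      push_neg at hno
      have : l ≤ Eeq - δ / 2 := ciSup_le hno
      rw [hlEeq] at this
      linarith
    obtain ⟨n, hn⟩ := hex
    obtain ⟨T, hT, hE1⟩ := hQ n (δ / 2) (by positivity)
    exact ⟨T, hT, fun t ht => by linarith [hE1 t ht]⟩
  -- choice of the margin δ
  set gE := g Eeq with hgEdef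
  have hgEpos : 0 < gE := hgpos Eeq hEeq.le
  have hδex : ∃ δ : ℝ, 0 < δ ∧ δ ≤ Eeq / 2 ∧
      μ * ((g (Eeq - δ) / (Eeq - δ)) * (1 - (g (Eeq - δ) / (g (Eeq - δ) + κ) - δ))) <
        ν * (gE + κ) := by
    have hmap : Tendsto (fun δ : ℝ => Eeq - δ) (𝓝[Ioc 0 (Eeq / 2)] 0) (𝓝[Ici 0] Eeq) := by
      rw [tendsto_nhdsWithin_iff]
      constructor
      · have hcont : Continuous fun δ : ℝ => Eeq - δ := continuous_const.sub continuous_id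
        have := (hcont.tendsto 0).mono_left (nhdsWithin_le_nhds (s := Ioc 0 (Eeq / 2)))
        simpa using this
      · refine eventually_mem_nhdsWithin.mono fun δ hδ => ?_
        have h1 : δ ≤ Eeq / 2 := hδ.2
        simp only [mem_Ici]
        linarith
    have hgtend : Tendsto (fun δ : ℝ => g (Eeq - δ)) (𝓝[Ioc 0 (Eeq / 2)] 0) (𝓝 gE) :=
      (hgcont Eeq hEeq.le).tendsto.comp hmap
    have hidt : Tendsto (fun δ : ℝ => δ) (𝓝[Ioc 0 (Eeq / 2)] (0:ℝ)) (𝓝 0) :=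
      (continuous_id.tendsto 0).mono_left nhdsWithin_le_nhds
    have hEtend : Tendsto (fun δ : ℝ => Eeq - δ) (𝓝[Ioc 0 (Eeq / 2)] 0) (𝓝 Eeq) := by
      have hcont : Continuous fun δ : ℝ => Eeq - δ := continuous_const.sub continuous_id
      have := (hcont.tendsto 0).mono_left (nhdsWithin_le_nhds (s := Ioc 0 (Eeq / 2)))
      simpa using this
    have hφ : Tendsto
        (fun δ : ℝ => μ * ((g (Eeq - δ) / (Eeq - δ)) *
          (1 - (g (Eeq - δ) / (g (Eeq - δ) + κ) - δ))))
        (𝓝[Ioc 0 (Eeq / 2)] 0)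
        (𝓝 (μ * ((gE / Eeq) * (1 - (gE / (gE + κ) - 0))))) := by
      apply Tendsto.const_mul
      apply Tendsto.mul
      · exact hgtend.div hEtend (ne_of_gt hEeq)
      · exact tendsto_const_nhds.sub
          ((hgtend.div (hgtend.add_const κ) (ne_of_gt (by linarith))).sub hidt)
    have hlim_lt : μ * ((gE / Eeq) * (1 - (gE / (gE + κ) - 0))) < ν * (gE + κ) := by
      have h1 : gE * (1 - Geq) = κ * Geq := by rw [hgEdef]; linarith [heq2]
      have h2 : μ * Geq = ν * Eeq := by linarith [heq1]
      rw [sub_zero, ← hGeqval]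
      have key : μ * (gE / Eeq * (1 - Geq)) = ν * κ := by
        rw [div_mul_eq_mul_div, mul_div_assoc']
        rw [div_eq_iff (ne_of_gt hEeq)]
        linear_combination μ * h1 + κ * h2
      rw [key]
      have : κ < gE + κ := by linarith
      linarith [mul_lt_mul_of_pos_left this hν]
    haveI : (𝓝[Ioc 0 (Eeq / 2)] (0:ℝ)).NeBot := by
      rw [nhdsWithin_Ioc_eq_nhdsGT (by positivity : (0:ℝ) < Eeq / 2)]
      infer_instance
    obtain ⟨δ, hδ1, hδ2⟩ := ((hφ.eventually_lt_const hlim_lt).and eventually_mem_nhdsWithin).exists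
    exact ⟨δ, hδ2.1, hδ2.2, hδ1⟩
  obtain ⟨δ, hδpos, hδle, hδcond⟩ := hδex
  set m := Eeq - δ with hmdef
  have hmpos : 0 < m := by rw [hmdef]; linarith
  have hmE : m ≤ Eeq := by rw [hmdef]; linarith
  obtain ⟨TE, hTE, hEm⟩ := hElower δ hδpos
  have hEmm : ∀ t, TE ≤ t → m ≤ E t := fun t ht => hEm t ht
  obtain ⟨TG, hTG, hGm⟩ := hGround m TE hmpos.le (le_trans hθ.le hTE) hEmm δ hδpos
  set Glb := g m / (g m + κ) - δ with hGlbdef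
  set T₀ := TG + θ with hT₀def
  have hTG0 : (0:ℝ) ≤ TG := by linarith [hθ.le, hTE]
  have hT₀θ : θ ≤ T₀ := by rw [hT₀def]; linarith
  have hT₀0 : (0:ℝ) ≤ T₀ := le_trans hθ.le hT₀θ
  have hT₀mθ : T₀ - θ = TG := by rw [hT₀def]; ring
  have hEhistm : ∀ t, T₀ - θ ≤ t → m ≤ E t := by
    intro t ht
    rw [hT₀mθ] at ht
    exact hEmm t (by linarith)
  have hGlbbound : ∀ t, T₀ - θ ≤ t → Glb ≤ G t := by
    intro t ht
    rw [hT₀mθ] at ht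
    exact hGm t ht
  -- constants for Halanay
  set κ' := gE + κ with hκ'def
  have hκ'pos : 0 < κ' := by rw [hκ'def]; linarith
  set c := g m / m * (1 - Glb) with hcdef
  have hGlble1 : Glb ≤ 1 := by
    have h1 := hGlbbound T₀ (by linarith)
    have h2 := hGle1 T₀ hT₀0
    linarith
  have hcnn : 0 ≤ c := by
    rw [hcdef]
    apply mul_nonneg (div_nonneg (hgpos m hmpos.le).le hmpos.le)
    linarith
  have hμc : μ * c < ν * κ' := by
    rw [hcdef, hGlbdef, hκ'def]
    calc μ * (g m / m * (1 - (g m / (g m + κ) - δ)))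
        = μ * ((g (Eeq - δ) / (Eeq - δ)) * (1 - (g (Eeq - δ) / (g (Eeq - δ) + κ) - δ))) := by
          rw [hmdef]
      _ < ν * (gE + κ) := hδcond
  set w := (c / κ' + ν / μ) / 2 with hwdef
  have hcw : c / κ' < ν / μ := by
    rw [div_lt_div_iff₀ hκ'pos hμ]
    linarith [hμc]
  have hwpos : 0 < w := by
    have h1 : 0 ≤ c / κ' := div_nonneg hcnn hκ'pos.le
    have h2 : 0 < ν / μ := by positivity
    rw [hwdef]
    linarith
  have hw1 : c < κ' * w := by
    have h1 : c / κ' < w := by rw [hwdef]; linarith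
    rw [div_lt_iff₀ hκ'pos] at h1
    linarith [h1]
  have hw2 : μ * w < ν := by
    have h1 : μ * (c / κ') < μ * (ν / μ) := mul_lt_mul_of_pos_left hcw hμ
    have h2 : μ * (ν / μ) = ν := by field_simp
    rw [hwdef]
    linarith [h1, h2]
  -- choice of lam
  have hlamex : ∃ lam : ℝ, 0 < lam ∧ μ * w + lam < ν ∧
      c * Real.exp (lam * θ) + lam * w < κ' * w := by
    have h1 : Tendsto (fun lam : ℝ => μ * w + lam) (𝓝 0) (𝓝 (μ * w + 0)) :=
      tendsto_const_nhds.add (continuous_id.tendsto 0)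
    have h2 : Tendsto (fun lam : ℝ => c * Real.exp (lam * θ) + lam * w) (𝓝 0)
        (𝓝 (c * Real.exp (0 * θ) + 0 * w)) := by
      apply Tendsto.add
      · exact tendsto_const_nhds.mul
          (Real.continuous_exp.tendsto _ |>.comp ((continuous_id.mul continuous_const).tendsto 0))
      · exact (continuous_id.mul continuous_const).tendsto 0
    have e1 := h1.eventually_lt_const (by linarith : μ * w + 0 < ν)
    have e2 : ∀ᶠ lam in 𝓝 (0:ℝ), c * Real.exp (lam * θ) + lam * w < κ' * w := by
      apply h2.eventually_lt_const
      simp only [zero_mul, Real.exp_zero, mul_one, add_zero]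
      exact hw1
    haveI : NeBot (𝓝[>] (0:ℝ)) := inferInstance
    obtain ⟨lam, hla, hlb⟩ :=
      (((e1.and e2).filter_mono (nhdsWithin_le_nhds (s := Ioi 0))).and
        eventually_mem_nhdsWithin).exists
    exact ⟨lam, hlb, hla.1, hla.2⟩
  obtain ⟨lam, hlam, hcond1, hcond2⟩ := hlamex
  -- history bound K
  have hsub0 : Icc (T₀ - θ) T₀ ⊆ Ici (0:ℝ) := by
    intro x hx
    have := hx.1
    rw [hT₀mθ] at this
    simp only [mem_Ici]
    linarith
  obtain ⟨C1, hC1⟩ := (isCompact_Icc (a := T₀ - θ) (b := T₀)).exists_bound_of_continuousOn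
    ((hEcont.mono hsub0).sub (continuousOn_const (c := Eeq)))
  obtain ⟨C2, hC2⟩ := (isCompact_Icc (a := T₀ - θ) (b := T₀)).exists_bound_of_continuousOn
    ((hGcont.mono hsub0).sub (continuousOn_const (c := Geq)))
  set K := max C1 (C2 / w) + 1 with hKdef
  have hTmem : T₀ ∈ Icc (T₀ - θ) T₀ := ⟨by linarith, le_refl _⟩
  have hC1nn : 0 ≤ C1 := le_trans (norm_nonneg _) (hC1 T₀ hTmem)
  have hKpos : 0 < K := by
    rw [hKdef]
    linarith [le_max_left C1 (C2 / w)]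
  have hist : ∀ s ∈ Icc (T₀ - θ) T₀, |E s - Eeq| ≤ K ∧ |G s - Geq| ≤ w * K := by
    intro s hs
    have h1 := hC1 s hs
    have h2 := hC2 s hs
    simp only [Real.norm_eq_abs, Pi.sub_apply] at h1 h2
    constructor
    · have := le_max_left C1 (C2 / w)
      rw [hKdef]; linarith
    · have h3 : C2 / w ≤ max C1 (C2 / w) := le_max_right _ _
      rw [div_le_iff₀ hwpos] at h3
      rw [hKdef]
      have h4 : w * (max C1 (C2 / w) + 1) = max C1 (C2 / w) * w + w := by ring
      linarith [h4, hwpos]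
  -- apply halanay
  have hde : ∀ t ∈ Ici T₀, HasDerivWithinAt (fun t => E t - Eeq)
      (μ * (G t - Geq) - ν * (E t - Eeq)) (Ici T₀) t := by
    intro t ht
    have ht' : T₀ ≤ t := ht
    have ht0 : (0:ℝ) ≤ t := le_trans hT₀0 ht'
    have hder := (hE' t ht0).sub_const Eeq
    have heqd : μ * G t - ν * E t = μ * (G t - Geq) - ν * (E t - Eeq) := by linarith [heq1]
    rw [heqd] at hder
    exact hder.mono (Ici_subset_Ici.mpr hT₀0)
  have hdh : ∀ t ∈ Ici T₀, HasDerivWithinAt (fun t => G t - Geq)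
      ((g (E (t - θ)) - gE) * (1 - G t) - κ' * (G t - Geq)) (Ici T₀) t := by
    intro t ht
    have ht' : T₀ ≤ t := ht
    have ht0 : (0:ℝ) ≤ t := le_trans hT₀0 ht'
    have hder := (hG' t ht0).sub_const Geq
    have heqd : g (E (t - θ)) * (1 - G t) - κ * G t =
        (g (E (t - θ)) - gE) * (1 - G t) - κ' * (G t - Geq) := by
      rw [hκ'def, hgEdef]
      linear_combination -heq2
    rw [heqd] at hder
    exact hder.mono (Ici_subset_Ici.mpr hT₀0)
  have hqb : ∀ t ∈ Ici T₀, |(g (E (t - θ)) - gE) * (1 - G t)| ≤ c * |E (t - θ) - Eeq| := by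
    intro t ht
    have ht' : T₀ ≤ t := ht
    have htθ : T₀ - θ ≤ t - θ := by linarith
    have hEd := hEhistm (t - θ) htθ
    have hlip := glip hgmono hgdec hmpos hEd hmE
    have hGt := hGlbbound t (by linarith)
    have hGt1 := hGle1 t (by linarith [hT₀0])
    rw [abs_mul, abs_of_nonneg (by linarith : (0:ℝ) ≤ 1 - G t)]
    calc |g (E (t - θ)) - gE| * (1 - G t)
        ≤ g m / m * |E (t - θ) - Eeq| * (1 - Glb) := by
          apply mul_le_mul ?_ (by linarith) (by linarith) ?_
          · rw [hgEdef]; exact hlip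
          · exact mul_nonneg (div_nonneg (hgpos m hmpos.le).le hmpos.le) (abs_nonneg _)
      _ = c * |E (t - θ) - Eeq| := by rw [hcdef]; ring
  have hhal := halanay (e := fun t => E t - Eeq) (h := fun t => G t - Geq)
    (q := fun t => (g (E (t - θ)) - gE) * (1 - G t)) (T₀ := T₀) (θ := θ) (μ := μ) (ν := ν)
    (κ' := κ') (c := c) (w := w) (lam := lam) (K := K)
    hθ hμ hν hwpos hlam hcnn hcond1 hcond2 hKpos hde hdh hqb hist
  -- final constant
  obtain ⟨B₀, hB₀⟩ := (isCompact_Icc (a := (0:ℝ)) (b := T₀)).exists_bound_of_continuousOn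
    ((((hEcont.mono Icc_subset_Ici_self).sub continuousOn_const).abs).add
      (((hGcont.mono Icc_subset_Ici_self).sub continuousOn_const).abs))
  set Cfin := max ((2 * K + w * (2 * K)) * Real.exp (lam * T₀)) (B₀ * Real.exp (lam * T₀)) + 1
    with hCfin
  have hCfinpos : 0 < Cfin := by
    have h1 : 0 < (2 * K + w * (2 * K)) * Real.exp (lam * T₀) := by positivity
    rw [hCfin]
    linarith [le_max_left ((2 * K + w * (2 * K)) * Real.exp (lam * T₀))
      (B₀ * Real.exp (lam * T₀))]
  refine ⟨Cfin, lam, hCfinpos, hlam, ?_⟩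
  intro t ht
  rcases le_or_gt T₀ t with hcase | hcase
  · obtain ⟨he, hh⟩ := hhal t hcase
    have hexp : Real.exp (-(lam * (t - T₀))) = Real.exp (lam * T₀) * Real.exp (-lam * t) := by
      rw [← Real.exp_add]; congr 1; ring
    rw [hexp] at he hh
    have h2 : (0:ℝ) < Real.exp (-lam * t) := Real.exp_pos _
    have h3 : (2 * K + w * (2 * K)) * Real.exp (lam * T₀) ≤ Cfin := by
      rw [hCfin]
      linarith [le_max_left ((2 * K + w * (2 * K)) * Real.exp (lam * T₀))
        (B₀ * Real.exp (lam * T₀))]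
    calc |E t - Eeq| + |G t - Geq|
        ≤ 2 * K * (Real.exp (lam * T₀) * Real.exp (-lam * t)) +
          w * (2 * K * (Real.exp (lam * T₀) * Real.exp (-lam * t))) := add_le_add he hh
      _ = (2 * K + w * (2 * K)) * Real.exp (lam * T₀) * Real.exp (-lam * t) := by ring
      _ ≤ Cfin * Real.exp (-lam * t) := mul_le_mul_of_nonneg_right h3 h2.le
  · have hmem : t ∈ Icc (0:ℝ) T₀ := ⟨ht, hcase.le⟩
    have hv := hB₀ t hmem
    rw [Real.norm_eq_abs] at hv
    have hval : |E t - Eeq| + |G t - Geq| ≤ B₀ := le_trans (le_abs_self _) hv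
    have hexp_mono : Real.exp (lam * t) ≤ Real.exp (lam * T₀) :=
      Real.exp_le_exp.mpr (mul_le_mul_of_nonneg_left hcase.le hlam.le)
    have hB₀nn : 0 ≤ B₀ := le_trans (by positivity) hval
    have h4 : B₀ * Real.exp (lam * t) ≤ B₀ * Real.exp (lam * T₀) :=
      mul_le_mul_of_nonneg_left hexp_mono hB₀nn
    have h5 : B₀ * Real.exp (lam * T₀) ≤ Cfin := by
      rw [hCfin]
      linarith [le_max_right ((2 * K + w * (2 * K)) * Real.exp (lam * T₀))
        (B₀ * Real.exp (lam * T₀))]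
    have h6 : Real.exp (lam * t) * Real.exp (-lam * t) = 1 := by
      rw [← Real.exp_add, show lam * t + -lam * t = 0 by ring, Real.exp_zero]
    have h7 : B₀ * Real.exp (lam * t) * Real.exp (-lam * t) ≤ Cfin * Real.exp (-lam * t) :=
      mul_le_mul_of_nonneg_right (h4.trans h5) (Real.exp_pos _).le
    have h8 : B₀ * Real.exp (lam * t) * Real.exp (-lam * t) = B₀ := by
      rw [mul_assoc, h6, mul_one]
    linarith [h7, h8, hval]

end
end

section
/- Fix x > 0 and define the sequence (c_n(x))_{n ≥ 1} by c_1(x) = 1/x and c_{n+1}(x) = 1/(x + n·c_n(x)). Then c_n(x) > 0 for all n and c_n(x) → 0 as n → ∞. Equivalently, the ratio Q_{n-1}(x)/Q_n(x) of involution polynomials tends to 0. Consequently, with q = (2y)^{-1/2} for y > 0 and E_n = (n(n-1)/2)·Q_{n-2}(q)/Q_n(q) the stationary mean number of dimers among n proteins, one has E_n/n → 1/2 as n → ∞. -/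
open Finset Filter Equiv Equiv.Perm

noncomputable section

/-- `Q_n(q) = Σ_{σ ∈ I_n} q^{fix(σ)}`: the generating function of involutions of
`S_n` by number of fixed points, evaluated at `q : ℝ`. -/
def invGen (n : ℕ) (q : ℝ) : ℝ :=
  ∑ σ ∈ Finset.univ.filter (fun σ : Equiv.Perm (Fin n) => σ * σ = 1),
    q ^ (Finset.univ.filter (fun x : Fin n => σ x = x)).card

/-- The continued-fraction sequence `c_1(x) = 1/x`, `c_{n+1}(x) = 1/(x + n·c_n(x))`. -/
def cseq (x : ℝ) : ℕ → ℝ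
  | 0 => 0
  | 1 => 1 / x
  | n + 2 => 1 / (x + (n + 1 : ℕ) * cseq x (n + 1))



def invSum (α : Type) [Fintype α] [DecidableEq α] (q : ℝ) : ℝ :=
  ∑ σ ∈ Finset.univ.filter (fun σ : Equiv.Perm α => σ * σ = 1),
    q ^ (Finset.univ.filter (fun x : α => σ x = x)).card

lemma invSum_congr {α β : Type} [Fintype α] [DecidableEq α] [Fintype β] [DecidableEq β]
    (e : α ≃ β) (q : ℝ) : invSum α q = invSum β q := by
  unfold invSum
  refine Finset.sum_bij' (fun σ _ => e.permCongr σ) (fun τ _ => e.symm.permCongr τ)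
    ?_ ?_ ?_ ?_ ?_
  · intro σ hσ
    simp only [mem_filter, mem_univ, true_and] at hσ ⊢
    ext b
    simp [Equiv.permCongr_apply, ← Equiv.Perm.mul_apply, hσ]
  · intro τ hτ
    simp only [mem_filter, mem_univ, true_and] at hτ ⊢
    ext a
    simp [Equiv.permCongr_apply, ← Equiv.Perm.mul_apply, hτ]
  · intro σ _; ext a; simp
  · intro τ _; ext b; simp
  · intro σ _
    congr 1
    refine Finset.card_nbij' (fun a => e a) (fun b => e.symm b) ?_ ?_ ?_ ?_
    · intro a ha; simp only [mem_coe, mem_filter, mem_univ, true_and] at ha ⊢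
      simp [Equiv.permCongr_apply, ha]
    · intro b hb; simp only [mem_coe, mem_filter, mem_univ, true_and] at hb ⊢
      simpa [Equiv.permCongr_apply] using congrArg e.symm hb
    · intro a _; simp
    · intro b _; simp



lemma fix_card_split {α : Type} [Fintype α] [DecidableEq α] (a : α) (σ : Equiv.Perm α)
    (ha : σ a = a) (h : ∀ x, x ≠ a ↔ σ x ≠ a) :
    (Finset.univ.filter (fun x : α => σ x = x)).card
      = (Finset.univ.filter (fun x : {x : α // x ≠ a} => σ.subtypePerm (fun x => (h x).symm) x = x)).card + 1 := by
  have hset : Finset.univ.filter (fun x : α => σ x = x)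
      = insert a ((Finset.univ.filter (fun x : {x : α // x ≠ a} => σ.subtypePerm (fun x => (h x).symm) x = x)).image
          Subtype.val) := by
    ext x
    simp only [mem_filter, mem_univ, true_and, mem_insert, mem_image]
    constructor
    · intro hx
      by_cases hxa : x = a
      · exact Or.inl hxa
      · exact Or.inr ⟨⟨x, hxa⟩, by simpa [Equiv.Perm.subtypePerm_apply, Subtype.ext_iff] using hx,
          rfl⟩
    · rintro (rfl | ⟨⟨y, hy⟩, hfix, rfl⟩)
      · exact ha
      · simpa [Equiv.Perm.subtypePerm_apply, Subtype.ext_iff] using hfix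
  rw [hset, Finset.card_insert_of_notMem, Finset.card_image_of_injective _ Subtype.val_injective]
  simp only [mem_image, mem_filter, mem_univ, true_and, not_exists, not_and]
  rintro ⟨y, hy⟩ _ h
  exact hy h

lemma sum_fix_part {α : Type} [Fintype α] [DecidableEq α] (q : ℝ) (a : α) :
    ∑ σ ∈ Finset.univ.filter (fun σ : Equiv.Perm α => σ * σ = 1 ∧ σ a = a),
      q ^ (Finset.univ.filter (fun x : α => σ x = x)).card
    = q * ∑ τ ∈ Finset.univ.filter (fun τ : Equiv.Perm {x : α // x ≠ a} => τ * τ = 1),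
      q ^ (Finset.univ.filter (fun x : {x : α // x ≠ a} => τ x = x)).card := by
  rw [Finset.mul_sum]
  have key : ∀ (σ : Equiv.Perm α), σ a = a → ∀ x : α, x ≠ a ↔ σ x ≠ a := by
    intro σ ha x
    constructor
    · intro hx hc
      exact hx (σ.injective (hc.trans ha.symm))
    · intro hx hc
      exact hx (hc ▸ ha)
  refine Finset.sum_bij' (fun σ hσ => σ.subtypePerm (fun x => (key σ (by
      simp only [mem_filter, mem_univ, true_and] at hσ; exact hσ.2) x).symm))
    (fun τ _ => Equiv.Perm.ofSubtype τ) ?_ ?_ ?_ ?_ ?_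
  · intro σ hσ
    simp only [mem_filter, mem_univ, true_and] at hσ ⊢
    ext x
    have := hσ.1
    simp only [Equiv.Perm.mul_apply, Equiv.Perm.subtypePerm_apply, Equiv.Perm.one_apply,
      Subtype.ext_iff]
    calc σ (σ x) = (σ * σ) x := rfl
    _ = x := by rw [this]; rfl
  · intro τ hτ
    simp only [mem_filter, mem_univ, true_and] at hτ ⊢
    constructor
    · rw [← map_mul, hτ, map_one]
    · exact Equiv.Perm.ofSubtype_apply_of_not_mem τ (by simp)
  · intro σ hσ
    simp only [mem_filter, mem_univ, true_and] at hσ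
    exact Equiv.Perm.ofSubtype_subtypePerm _
      (fun x hx => fun hxa => hx (by rw [hxa, hσ.2]))
  · intro τ _
    ext x
    simp [Equiv.Perm.subtypePerm_apply, Equiv.Perm.ofSubtype_apply_coe]
  · intro σ hσ
    simp only [mem_filter, mem_univ, true_and] at hσ
    rw [fix_card_split a σ hσ.2 (key σ hσ.2), pow_succ, mul_comm]



lemma sum_swap_part {α : Type} [Fintype α] [DecidableEq α] (q : ℝ) (a b : α) (hab : b ≠ a) :
    ∑ σ ∈ Finset.univ.filter (fun σ : Equiv.Perm α => σ * σ = 1 ∧ σ a = b),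
      q ^ (Finset.univ.filter (fun x : α => σ x = x)).card
    = ∑ τ ∈ Finset.univ.filter (fun τ : Equiv.Perm {x : α // x ≠ a ∧ x ≠ b} => τ * τ = 1),
      q ^ (Finset.univ.filter (fun x : {x : α // x ≠ a ∧ x ≠ b} => τ x = x)).card := by
  have sq : ∀ (σ : Equiv.Perm α), σ * σ = 1 → ∀ x, σ (σ x) = x := by
    intro σ h x
    calc σ (σ x) = (σ * σ) x := rfl
    _ = x := by rw [h]; rfl
  have key : ∀ (σ : Equiv.Perm α), σ * σ = 1 → σ a = b →
      ∀ x : α, (x ≠ a ∧ x ≠ b) ↔ (σ x ≠ a ∧ σ x ≠ b) := by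
    intro σ h1 hb x
    have hba : σ b = a := by rw [← hb]; exact sq σ h1 a
    constructor
    · rintro ⟨hxa, hxb⟩
      constructor
      · intro hc; exact hxb (by rw [← sq σ h1 x, hc, hb])
      · intro hc; exact hxa (by rw [← sq σ h1 x, hc, hba])
    · rintro ⟨hxa, hxb⟩
      constructor
      · intro hc; exact hxb (by rw [hc, hb])
      · intro hc; exact hxa (by rw [hc, hba])
  refine Finset.sum_bij' (fun σ hσ => σ.subtypePerm (fun x => (key σ
      (by simp only [mem_filter, mem_univ, true_and] at hσ; exact hσ.1)
      (by simp only [mem_filter, mem_univ, true_and] at hσ; exact hσ.2) x).symm))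
    (fun τ _ => Equiv.Perm.ofSubtype τ * Equiv.swap a b) ?_ ?_ ?_ ?_ ?_
  · intro σ hσ
    simp only [mem_filter, mem_univ, true_and] at hσ ⊢
    ext x
    simp only [Equiv.Perm.mul_apply, Equiv.Perm.subtypePerm_apply, Equiv.Perm.one_apply,
      Subtype.ext_iff]
    exact sq σ hσ.1 x
  · intro τ hτ
    simp only [mem_filter, mem_univ, true_and] at hτ ⊢
    have hdisj : Equiv.Perm.Disjoint (Equiv.Perm.ofSubtype τ) (Equiv.swap a b) := by
      intro x
      by_cases hx : x ≠ a ∧ x ≠ b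
      · exact Or.inr (Equiv.swap_apply_of_ne_of_ne hx.1 hx.2)
      · refine Or.inl (Equiv.Perm.ofSubtype_apply_of_not_mem τ hx)
    constructor
    · have hc : Commute (Equiv.Perm.ofSubtype τ) (Equiv.swap a b) := hdisj.commute
      rw [hc.symm.mul_mul_mul_comm, ← map_mul, hτ, map_one, one_mul, Equiv.swap_mul_self]
    · rw [Equiv.Perm.mul_apply, Equiv.swap_apply_left,
        Equiv.Perm.ofSubtype_apply_of_not_mem τ (by simp)]
  · intro σ hσ
    simp only [mem_filter, mem_univ, true_and] at hσ
    have hba : σ b = a := by rw [← hσ.2]; exact sq σ hσ.1 a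
    ext x
    simp only [Equiv.Perm.mul_apply]
    by_cases hx : x ≠ a ∧ x ≠ b
    · rw [Equiv.swap_apply_of_ne_of_ne hx.1 hx.2,
        Equiv.Perm.ofSubtype_apply_of_mem (p := fun x => x ≠ a ∧ x ≠ b) _ hx]
      simp [Equiv.Perm.subtypePerm_apply]
    · rcases not_and_or.mp hx with hx | hx
      · push_neg at hx; subst hx
        rw [Equiv.swap_apply_left, Equiv.Perm.ofSubtype_apply_of_not_mem _ (by simp [hab]),
          hσ.2]
      · push_neg at hx; subst hx
        rw [Equiv.swap_apply_right, Equiv.Perm.ofSubtype_apply_of_not_mem _ (by simp), hba]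
  · intro τ _
    ext ⟨x, hx⟩
    simp only [Equiv.Perm.subtypePerm_apply, Equiv.Perm.mul_apply, Subtype.ext_iff]
    rw [Equiv.swap_apply_of_ne_of_ne hx.1 hx.2,
      Equiv.Perm.ofSubtype_apply_of_mem (p := fun x => x ≠ a ∧ x ≠ b) _ hx]
  · intro σ hσ
    simp only [mem_filter, mem_univ, true_and] at hσ
    have hba : σ b = a := by rw [← hσ.2]; exact sq σ hσ.1 a
    congr 1
    have hmem : ∀ x ∈ Finset.univ.filter (fun x : α => σ x = x), x ≠ a ∧ x ≠ b := by
      intro x hx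
      simp only [mem_filter, mem_univ, true_and] at hx
      constructor
      · rintro rfl; exact hab (hx ▸ hσ.2).symm
      · rintro rfl; exact hab (hx ▸ hba)
    refine Finset.card_bij' (fun x hx => (⟨x, hmem x hx⟩ : {x : α // x ≠ a ∧ x ≠ b}))
      (fun x _ => x.val) ?_ ?_ ?_ ?_
    · intro x hx
      simp only [mem_filter, mem_univ, true_and] at hx ⊢
      simp [Equiv.Perm.subtypePerm_apply, Subtype.ext_iff, hx]
    · intro x hx
      simp only [mem_filter, mem_univ, true_and] at hx ⊢
      simpa [Equiv.Perm.subtypePerm_apply, Subtype.ext_iff] using hx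
    · intro x _; rfl
    · intro x _; rfl

lemma invSum_eq_invGen (α : Type) [Fintype α] [DecidableEq α] (q : ℝ) :
    invSum α q = invGen (Fintype.card α) q :=
  invSum_congr (Fintype.equivFin α) q

lemma invGen_rec (n : ℕ) (q : ℝ) :
    invGen (n + 2) q = q * invGen (n + 1) q + (n + 1 : ℝ) * invGen n q := by
  have h0 : invGen (n + 2) q = invSum (Fin (n + 2)) q := by
    rw [invSum_eq_invGen, Fintype.card_fin]
  set a : Fin (n + 2) := 0 with ha
  rw [h0]
  unfold invSum
  rw [← Finset.sum_fiberwise_of_maps_to (g := fun σ : Equiv.Perm (Fin (n+2)) => σ a)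
    (t := Finset.univ) (fun σ _ => Finset.mem_univ _)]
  simp only [Finset.filter_filter]
  rw [← Finset.add_sum_erase _ _ (Finset.mem_univ a)]
  have hfix : ∑ σ ∈ Finset.univ.filter
        (fun σ : Equiv.Perm (Fin (n+2)) => σ * σ = 1 ∧ σ a = a),
      q ^ (Finset.univ.filter (fun x => σ x = x)).card = q * invGen (n + 1) q := by
    rw [sum_fix_part q a]
    congr 1
    have : invSum {x : Fin (n+2) // x ≠ a} q = invGen (n+1) q := by
      rw [invSum_eq_invGen]
      congr 1
      rw [Fintype.card_subtype]
      rw [Finset.filter_ne', Finset.card_erase_of_mem (Finset.mem_univ a)]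
      simp
    exact this
  rw [hfix]
  congr 1
  have hswap : ∀ b ∈ Finset.univ.erase a,
      ∑ σ ∈ Finset.univ.filter (fun σ : Equiv.Perm (Fin (n+2)) => σ * σ = 1 ∧ σ a = b),
        q ^ (Finset.univ.filter (fun x => σ x = x)).card = invGen n q := by
    intro b hb
    have hba : b ≠ a := Finset.ne_of_mem_erase hb
    rw [sum_swap_part q a b hba]
    have : invSum {x : Fin (n+2) // x ≠ a ∧ x ≠ b} q = invGen n q := by
      rw [invSum_eq_invGen]
      congr 1
      rw [Fintype.card_subtype]
      have : Finset.univ.filter (fun x : Fin (n+2) => x ≠ a ∧ x ≠ b)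
          = (Finset.univ.erase a).erase b := by
        ext x; simp [Finset.mem_erase, and_comm]
      rw [this, Finset.card_erase_of_mem, Finset.card_erase_of_mem (Finset.mem_univ a)]
      · simp
      · exact Finset.mem_erase.mpr ⟨hba, Finset.mem_univ b⟩
    exact this
  rw [Finset.sum_congr rfl hswap, Finset.sum_const,
    Finset.card_erase_of_mem (Finset.mem_univ a)]
  simp [nsmul_eq_mul]

lemma invGen_zero (q : ℝ) : invGen 0 q = 1 := by
  unfold invGen
  rw [Finset.sum_eq_single 1]
  · simp
  · intro σ hσ _
    exact absurd (Subsingleton.elim σ 1) (by simp_all)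
  · simp

lemma invGen_one (q : ℝ) : invGen 1 q = q := by
  unfold invGen
  rw [Finset.sum_eq_single 1]
  · simp [Finset.filter_true_of_mem]
  · intro σ hσ hne
    exact absurd (Subsingleton.elim σ 1) hne
  · simp

lemma invGen_pos (n : ℕ) {q : ℝ} (hq : 0 < q) : 0 < invGen n q := by
  unfold invGen
  refine Finset.sum_pos' (fun σ _ => pow_nonneg hq.le _) ⟨1, ?_, pow_pos hq _⟩
  simp

variable {x : ℝ}

lemma cseq_pos (hx : 0 < x) : ∀ n : ℕ, 0 < cseq x (n + 1) := by
  intro n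
  induction n with
  | zero => simpa [cseq] using one_div_pos.mpr hx
  | succ m ih =>
    show 0 < 1 / (x + ((m + 1 : ℕ) : ℝ) * cseq x (m + 1))
    have : (0:ℝ) < ((m + 1 : ℕ) : ℝ) := by positivity
    positivity

lemma cseq_le (hx : 0 < x) : ∀ n : ℕ, cseq x (n + 1) ≤ 1 / x := by
  intro n
  induction n with
  | zero => simp [cseq]
  | succ m _ =>
    show 1 / (x + ((m + 1 : ℕ) : ℝ) * cseq x (m + 1)) ≤ 1 / x
    apply one_div_le_one_div_of_le hx
    have h1 : (0:ℝ) ≤ ((m + 1 : ℕ) : ℝ) * cseq x (m + 1) :=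
      mul_nonneg (by positivity) (cseq_pos hx m).le
    linarith

lemma cseq_key (hx : 0 < x) (m : ℕ) :
    cseq x (m + 3) ≤ (x + ((m+1:ℕ):ℝ) * cseq x (m + 1)) /
      (((m+1:ℕ):ℝ) * (1 + x * cseq x (m + 1))) := by
  set c := cseq x (m + 1) with hc
  have hcpos : 0 < c := cseq_pos hx m
  set d : ℝ := x + ((m+1:ℕ):ℝ) * c with hd
  have hm1 : (0:ℝ) < ((m+1:ℕ):ℝ) := by positivity
  have hdpos : 0 < d := by rw [hd]; positivity
  have h2 : cseq x (m + 2) = 1 / d := rfl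
  have h3 : cseq x (m + 3) = 1 / (x + ((m+2:ℕ):ℝ) * cseq x (m + 2)) := rfl
  rw [h3, h2]
  have hm2 : (0:ℝ) < ((m+2:ℕ):ℝ) := by positivity
  have hden : (0:ℝ) < x + ((m+2:ℕ):ℝ) * (1/d) := by positivity
  have hden2 : (0:ℝ) < ((m+1:ℕ):ℝ) * (1 + x * c) := by positivity
  rw [div_le_div_iff₀ hden hden2, one_mul]
  have hexp : (x + ((m+2:ℕ):ℝ) * (1/d)) * d = x * d + ((m+2:ℕ):ℝ) := by
    field_simp
  have hxd : x * d = x^2 + ((m+1:ℕ):ℝ) * (x*c) := by rw [hd]; ring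
  push_cast at hexp hxd ⊢
  nlinarith [hexp, hxd, sq_nonneg x, mul_pos hx hcpos, hm1]

lemma step_ineq {x A n c : ℝ} (hx : 0 < x) (hA2 : 2 ≤ A) (hn1 : 1 ≤ n) (hnx2 : x^2 ≤ n)
    (hx2n : 1 ≤ x^2 * n) (hcpos : 0 < c) (hcle : c ≤ A / Real.sqrt n) :
    (x + n * c) / (n * (1 + x * c)) ≤ A / Real.sqrt (n + 2) := by
  have hnpos : (0:ℝ) < n := by linarith
  have hApos : (0:ℝ) < A := by linarith
  have hspos : 0 < Real.sqrt n := Real.sqrt_pos.mpr hnpos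
  have htpos : 0 < Real.sqrt (n + 2) := Real.sqrt_pos.mpr (by linarith)
  obtain ⟨s, hspos, hs2⟩ : ∃ s : ℝ, 0 < s ∧ s^2 = n :=
    ⟨Real.sqrt n, hspos, Real.sq_sqrt hnpos.le⟩
  obtain ⟨t, htpos, ht2, htdef⟩ : ∃ t : ℝ, 0 < t ∧ t^2 = n + 2 ∧ t = Real.sqrt (n+2) :=
    ⟨Real.sqrt (n + 2), htpos, Real.sq_sqrt (by linarith), rfl⟩
  have hsdef : Real.sqrt n = s := by
    rw [← hs2, Real.sqrt_sq hspos.le]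
  rw [hsdef] at hcle
  rw [← htdef]
  have hxs : 1 ≤ x * s := by
    have e : x^2 * s^2 = x^2 * n := by rw [hs2]
    nlinarith [mul_pos hx hspos]
  have hst : s * t ≤ n + 1 := by nlinarith [sq_nonneg (s - t)]
  have ht2s : t ≤ 2 * s := by nlinarith
  have step1 : (x + n * c) / (n * (1 + x * c)) ≤ (x + n * (A/s)) / (n * (1 + x * (A/s))) := by
    have hCpos : 0 < A / s := div_pos hApos hspos
    rw [div_le_div_iff₀ (by positivity) (by positivity)]
    nlinarith [mul_nonneg (mul_nonneg hnpos.le (sub_nonneg.mpr hnx2))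
      (sub_nonneg.mpr hcle), mul_pos hnpos hcpos]
  have step2 : (x + n * (A/s)) / (n * (1 + x * (A/s))) ≤ A / t := by
    have hCpos : 0 < A / s := div_pos hApos hspos
    rw [div_le_div_iff₀ (by positivity) htpos]
    have e1 : n * (A/s) = A * s := by rw [← hs2]; field_simp
    have e2 : A * (n * (1 + x * (A/s))) = A * n + A^2 * (x * s) := by
      rw [← hs2]; field_simp
    rw [e1, e2]
    nlinarith [mul_le_mul_of_nonneg_left hst hApos.le,
      mul_le_mul_of_nonneg_left ht2s hx.le,
      mul_nonneg (sub_nonneg.mpr hA2) (sub_nonneg.mpr hxs),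
      mul_nonneg (mul_nonneg (sub_nonneg.mpr hA2) (sub_nonneg.mpr hA2))
        (sub_nonneg.mpr hxs),
      mul_nonneg (sub_nonneg.mpr hA2) (mul_nonneg hx.le hspos.le)]
  exact le_trans step1 step2

lemma cseq_bound (hx : 0 < x) : ∃ (A : ℝ) (N : ℕ), 0 < A ∧ 1 ≤ N ∧
    ∀ k : ℕ, cseq x (N + k) ≤ A / Real.sqrt ((N + k : ℕ) : ℝ) := by
  obtain ⟨N, hN⟩ := exists_nat_ge (max (x^2) (1/x^2) + 1)
  have hN1 : (1:ℝ) ≤ N := by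
    have h0 : (0:ℝ) ≤ max (x^2) (1/x^2) := le_trans (by positivity) (le_max_left _ _)
    linarith
  have hNx : x^2 ≤ N := le_trans (le_trans (le_max_left _ _) (by linarith)) hN
  have hNix : 1/x^2 ≤ N := le_trans (le_trans (le_max_right _ _) (by linarith)) hN
  have hNnat : 1 ≤ N := by exact_mod_cast hN1
  set A : ℝ := max 2 (Real.sqrt ((N:ℝ) + 1) / x) with hA
  have hA2 : 2 ≤ A := le_max_left _ _
  have hApos : 0 < A := lt_of_lt_of_le (by norm_num) hA2
  refine ⟨A, N, hApos, hNnat, ?_⟩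
  have hle : ∀ n : ℕ, 1 ≤ n → cseq x n ≤ 1 / x := by
    intro n hn
    obtain ⟨m, rfl⟩ : ∃ m, n = m + 1 := ⟨n - 1, (Nat.succ_pred_eq_of_pos hn).symm⟩
    exact cseq_le hx m
  have hbase : ∀ j : ℕ, 1 ≤ N + j → ((N + j : ℕ) : ℝ) ≤ (N:ℝ) + 1 →
      cseq x (N + j) ≤ A / Real.sqrt ((N + j : ℕ) : ℝ) := by
    intro j hj hj2
    have hjpos : (0:ℝ) < ((N + j : ℕ) : ℝ) := by
      have : (1:ℝ) ≤ ((N + j : ℕ) : ℝ) := by exact_mod_cast hj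
      linarith
    have hsp : 0 < Real.sqrt ((N + j : ℕ) : ℝ) := Real.sqrt_pos.mpr hjpos
    have hsp1 : 0 < Real.sqrt ((N:ℝ) + 1) := Real.sqrt_pos.mpr (by positivity)
    have h1 : 1 / x ≤ A / Real.sqrt ((N:ℝ) + 1) := by
      rw [div_le_div_iff₀ hx hsp1]
      have hle2 : Real.sqrt ((N:ℝ)+1) / x ≤ A := le_max_right _ _
      calc 1 * Real.sqrt ((N:ℝ)+1) = (Real.sqrt ((N:ℝ)+1)/x)*x := by field_simp
        _ ≤ A * x := mul_le_mul_of_nonneg_right hle2 hx.le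
    have h2 : A / Real.sqrt ((N:ℝ) + 1) ≤ A / Real.sqrt ((N + j : ℕ) : ℝ) :=
      div_le_div_of_nonneg_left hApos.le hsp (Real.sqrt_le_sqrt hj2)
    exact le_trans (le_trans (hle _ hj) h1) h2
  -- two-step induction
  have main : ∀ k : ℕ, cseq x (N + k) ≤ A / Real.sqrt ((N + k : ℕ) : ℝ) ∧
      cseq x (N + k + 1) ≤ A / Real.sqrt ((N + k + 1 : ℕ) : ℝ) := by
    intro k
    induction k with
    | zero =>
      constructor
      · exact hbase 0 (by omega) (by push_cast; linarith)
      · have := hbase 1 (by omega) (by push_cast; linarith)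
        simpa using this
    | succ k ih =>
      refine ⟨ih.2, ?_⟩
      obtain ⟨m, hm⟩ : ∃ m, N + k = m + 1 := ⟨N + k - 1, by omega⟩
      have hkey := cseq_key hx m
      rw [← hm] at hkey
      have hcastN : ((N:ℕ):ℝ) ≤ ((N + k : ℕ):ℝ) := by push_cast; linarith [Nat.cast_nonneg (α := ℝ) k]
      have hn1 : (1:ℝ) ≤ ((N + k : ℕ):ℝ) := by
        exact_mod_cast (by omega : 1 ≤ N + k)
      have hnx2 : x^2 ≤ ((N + k : ℕ):ℝ) := le_trans hNx hcastN
      have hx2n : (1:ℝ) ≤ x^2 * ((N + k : ℕ):ℝ) := by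
        have h1 : x^2 * (1/x^2) ≤ x^2 * ((N + k : ℕ):ℝ) :=
          mul_le_mul_of_nonneg_left (le_trans hNix hcastN) (sq_nonneg x)
        have h2 : x^2 * (1/x^2) = 1 := by field_simp
        linarith
      have hcpos : 0 < cseq x (N + k) := by rw [hm]; exact cseq_pos hx m
      have hstep := step_ineq hx hA2 hn1 hnx2 hx2n hcpos ih.1
      have hidx : N + (k + 1) + 1 = m + 3 := by omega
      have hcast : ((m + 3 : ℕ) : ℝ) = ((N + k : ℕ) : ℝ) + 2 := by
        have h : m + 3 = (N + k) + 2 := by omega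
        rw [h]; push_cast; ring
      rw [hidx, hcast]
      exact le_trans hkey hstep
  exact fun k => (main k).1


lemma cseq_tendsto (hx : 0 < x) : Tendsto (cseq x) atTop (nhds 0) := by
  obtain ⟨A, N, hApos, hN1, hbd⟩ := cseq_bound hx
  have hupper : Tendsto (fun n : ℕ => A / Real.sqrt (n : ℝ)) atTop (nhds 0) := by
    have h1 : Tendsto (fun n : ℕ => ((n : ℝ))⁻¹) atTop (nhds 0) :=
      tendsto_inv_atTop_nhds_zero_nat
    have h2 := h1.sqrt
    rw [Real.sqrt_zero] at h2
    have h3 : Tendsto (fun n : ℕ => (Real.sqrt (n : ℝ))⁻¹) atTop (nhds 0) := by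
      refine h2.congr fun n => ?_
      rw [Real.sqrt_inv]
    have := h3.const_mul A
    simpa [div_eq_mul_inv] using this
  refine tendsto_of_tendsto_of_tendsto_of_le_of_le' tendsto_const_nhds hupper ?_ ?_
  · filter_upwards [eventually_ge_atTop 1] with n hn
    obtain ⟨m, rfl⟩ : ∃ m, n = m + 1 := ⟨n - 1, by omega⟩
    exact (cseq_pos hx m).le
  · filter_upwards [eventually_ge_atTop N] with n hn
    obtain ⟨k, rfl⟩ : ∃ k, n = N + k := ⟨n - N, by omega⟩
    exact hbd k

lemma invGen_ratio (hx : 0 < x) : ∀ n : ℕ, invGen n x / invGen (n + 1) x = cseq x (n + 1) := by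
  intro n
  induction n with
  | zero => rw [invGen_zero, invGen_one]; rfl
  | succ n ih =>
    have hQn := invGen_pos n hx
    have hQn1 := invGen_pos (n + 1) hx
    have h2 : cseq x (n + 2) = 1 / (x + ((n + 1 : ℕ) : ℝ) * cseq x (n + 1)) := rfl
    rw [h2, ← ih, invGen_rec]
    have hd2 : (0:ℝ) < x + ((n + 1 : ℕ) : ℝ) * (invGen n x / invGen (n + 1) x) := by
      have hm1 : (0:ℝ) < ((n + 1 : ℕ):ℝ) := by positivity
      positivity
    rw [div_eq_div_iff (by positivity) hd2.ne']
    push_cast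
    field_simp


/-- Theorem `ctozero`: `c_n(x) > 0` and `c_n(x) → 0`;
equivalently `Q_{n-1}(x)/Q_n(x) → 0`; consequently, with `q = (2y)^{-1/2}` and
`E_n = (n(n-1)/2)·Q_{n-2}(q)/Q_n(q)` the stationary mean number of dimers,
`E_n/n → 1/2`. -/
theorem cseq_tendsto_zero_and_dimer_fraction (x : ℝ) (hx : 0 < x) :
    (∀ n : ℕ, 1 ≤ n → 0 < cseq x n) ∧
    Tendsto (cseq x) atTop (nhds 0) ∧
    Tendsto (fun n : ℕ => invGen (n - 1) x / invGen n x) atTop (nhds 0) ∧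
    (∀ y : ℝ, 0 < y →
      Tendsto
        (fun n : ℕ =>
          ((n : ℝ) * ((n : ℝ) - 1) / 2
              * invGen (n - 2) (1 / Real.sqrt (2 * y))
              / invGen n (1 / Real.sqrt (2 * y))) / (n : ℝ))
        atTop (nhds (1 / 2))) := by
  refine ⟨?_, cseq_tendsto hx, ?_, ?_⟩
  · intro n hn
    obtain ⟨m, rfl⟩ : ∃ m, n = m + 1 := ⟨n - 1, by omega⟩
    exact cseq_pos hx m
  · refine (cseq_tendsto hx).congr' ?_
    filter_upwards [eventually_ge_atTop 1] with n hn
    obtain ⟨m, rfl⟩ : ∃ m, n = m + 1 := ⟨n - 1, by omega⟩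
    simpa using (invGen_ratio hx m).symm
  · intro y hy
    set q : ℝ := 1 / Real.sqrt (2 * y) with hq
    have hqpos : 0 < q := by
      rw [hq]
      exact div_pos one_pos (Real.sqrt_pos.mpr (by linarith))
    have hlim : Tendsto (fun n : ℕ => (1 - q * cseq q n) / 2) atTop (nhds (1 / 2)) := by
      have h1 : Tendsto (fun n : ℕ => q * cseq q n) atTop (nhds 0) := by
        simpa using (cseq_tendsto hqpos).const_mul q
      have h2 : Tendsto (fun n : ℕ => 1 - q * cseq q n) atTop (nhds 1) := by
        simpa using tendsto_const_nhds.sub h1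
      have := h2.div_const 2
      simpa using this
    refine hlim.congr' ?_
    filter_upwards [eventually_ge_atTop 2] with n hn
    obtain ⟨m, rfl⟩ : ∃ m, n = m + 2 := ⟨n - 2, by omega⟩
    have hQm := invGen_pos m hqpos
    have hQm1 := invGen_pos (m + 1) hqpos
    have hQm2 := invGen_pos (m + 2) hqpos
    have hc1 : cseq q (m + 1) = invGen m q / invGen (m + 1) q := (invGen_ratio hqpos m).symm
    have hc2 : cseq q (m + 2) = invGen (m + 1) q / invGen (m + 2) q :=
      (invGen_ratio hqpos (m + 1)).symm
    have hrec : cseq q (m + 2) * (q + ((m + 1 : ℕ) : ℝ) * cseq q (m + 1)) = 1 := by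
      have hd : (0:ℝ) < q + ((m + 1 : ℕ) : ℝ) * cseq q (m + 1) := by
        have := cseq_pos hqpos m
        have hm1 : (0:ℝ) < ((m + 1 : ℕ):ℝ) := by positivity
        positivity
      have h2 : cseq q (m + 2) = 1 / (q + ((m + 1 : ℕ) : ℝ) * cseq q (m + 1)) := rfl
      rw [h2, one_div, inv_mul_cancel₀ hd.ne']
    have hid : ((m + 1 : ℕ) : ℝ) * cseq q (m + 1) * cseq q (m + 2) = 1 - q * cseq q (m + 2) := by
      nlinarith [hrec]
    have hsub1 : (m + 2 : ℕ) - 1 = m + 1 := rfl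
    have hsub2 : (m + 2 : ℕ) - 2 = m := rfl
    rw [hsub2]
    have hcast : ((m + 2 : ℕ) : ℝ) = (m : ℝ) + 2 := by push_cast; ring
    rw [hcast]
    have hprod : invGen m q / invGen (m + 2) q = cseq q (m + 1) * cseq q (m + 2) := by
      rw [hc1, hc2]
      field_simp
    have hne : ((m : ℝ) + 2) ≠ 0 := by positivity
    have expand : ((m : ℝ) + 2) * (((m : ℝ) + 2) - 1) / 2 * invGen m q / invGen (m + 2) q
        = (((m : ℝ) + 1) * (invGen m q / invGen (m + 2) q)) * (((m : ℝ) + 2) / 2) := by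
      field_simp
      ring
    rw [expand, hprod]
    rw [show ((m:ℝ) + 1) * (cseq q (m + 1) * cseq q (m + 2))
        = ((m + 1 : ℕ) : ℝ) * cseq q (m + 1) * cseq q (m + 2) by push_cast; ring, hid]
    field_simp

end
end

section
/- Fix y > 0 and for integers m set Z_m = Σ_{i=0}^{⌊m/2⌋} yⁱ/((m-2i)!·i!) for m ≥ 0 and Z_m = 0 for m < 0. Then for all integers n ≥ 0 and j ≥ 0: Σ_{i=0}^{⌊n/2⌋} i(i-1)(i-2)⋯(i-j)·yⁱ/((n-2i)!·i!) = y^{j+1}·Z_{n-2(j+1)}. Consequently, for the stationary dimer distribution μⁿ(i) = yⁱ/((n-2i)!·i!·Z_n) with factorial-moment polynomial P_{j+1}(i) = i(i-1)⋯(i-j) and mean E_m = y·Z_{m-2}/Z_m (with E_m = 0 for m < 0), one has Σ_i P_{j+1}(i)·μⁿ(i) = E_{n-2j}·E_{n-2(j-1)}⋯E_{n-2}·E_n. -/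
open Finset

noncomputable section

/-- The partition function `Z_m = Σ_{i=0}^{⌊m/2⌋} yⁱ/((m-2i)!·i!)` for `m ≥ 0`,
with the convention `Z_m = 0` for `m < 0`. -/
def Zdim (y : ℝ) (m : ℤ) : ℝ :=
  if 0 ≤ m then
    ∑ i ∈ Finset.range (m.toNat / 2 + 1),
      y ^ i / ((m.toNat - 2 * i).factorial * i.factorial)
  else 0

/-- The stationary dimer distribution `μⁿ(i) = yⁱ/((n-2i)!·i!·Z_n)`. -/
def muDim (y : ℝ) (n i : ℕ) : ℝ :=
  y ^ i / ((n - 2 * i).factorial * i.factorial * Zdim y n)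

/-- The stationary mean number of dimers `E_m = y·Z_{m-2}/Z_m`
(equal to `0` for `m < 0`). -/
def Edim (y : ℝ) (m : ℤ) : ℝ := y * Zdim y (m - 2) / Zdim y m

lemma Zdim_pos (y : ℝ) (hy : 0 < y) {m : ℤ} (hm : 0 ≤ m) : 0 < Zdim y m := by
  rw [Zdim, if_pos hm]
  apply Finset.sum_pos
  · intro i _
    have h1 : (0:ℝ) < (m.toNat - 2 * i).factorial := by
      exact_mod_cast (m.toNat - 2 * i).factorial_pos
    have h2 : (0:ℝ) < i.factorial := by exact_mod_cast i.factorial_pos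
    positivity
  · exact ⟨0, by simp⟩

lemma Zdim_neg (y : ℝ) {m : ℤ} (hm : m < 0) : Zdim y m = 0 := by
  rw [Zdim, if_neg (by omega)]

lemma hmom (y : ℝ) (hy : 0 < y) (n j : ℕ) :
    ∑ i ∈ Finset.range (n / 2 + 1),
        (∏ l ∈ Finset.range (j + 1), ((i : ℝ) - (l : ℝ)))
          * y ^ i / ((n - 2 * i).factorial * i.factorial)
      = y ^ (j + 1) * Zdim y ((n : ℤ) - 2 * ((j : ℤ) + 1)) := by
  by_cases hn : 2 * (j + 1) ≤ n
  · have hz : ((n : ℤ) - 2 * ((j : ℤ) + 1)) = ((n - 2 * (j + 1) : ℕ) : ℤ) := by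
      push_cast; omega
    set m := n - 2 * (j + 1) with hmdef
    rw [hz, Zdim, if_pos (by positivity), Int.toNat_natCast]
    have hsplit : n / 2 + 1 = (j + 1) + (m / 2 + 1) := by omega
    rw [hsplit, Finset.sum_range_add]
    have h1 : ∑ i ∈ Finset.range (j + 1),
        (∏ l ∈ Finset.range (j + 1), ((i : ℝ) - (l : ℝ)))
          * y ^ i / ((n - 2 * i).factorial * i.factorial) = 0 := by
      apply Finset.sum_eq_zero
      intro i hi
      rw [Finset.prod_eq_zero hi (by ring)]
      simp
    rw [h1, zero_add, Finset.mul_sum]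
    apply Finset.sum_congr rfl
    intro k hk
    have hk2 : 2 * k ≤ m := by
      simp only [Finset.mem_range] at hk; omega
    have hprod : (∏ l ∈ Finset.range (j + 1), (((j + 1 + k : ℕ) : ℝ) - (l : ℝ)))
        = ((j + 1 + k).descFactorial (j + 1) : ℝ) := by
      rw [Nat.descFactorial_eq_prod_range, Nat.cast_prod]
      apply Finset.prod_congr rfl
      intro l hl
      simp only [Finset.mem_range] at hl
      rw [Nat.cast_sub (by omega)]
    have hsub : n - 2 * (j + 1 + k) = m - 2 * k := by omega
    have hfac : (k.factorial : ℝ) * ((j + 1 + k).descFactorial (j + 1) : ℝ)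
        = ((j + 1 + k).factorial : ℝ) := by
      rw [← Nat.cast_mul]
      congr 1
      have := Nat.factorial_mul_descFactorial (n := j + 1 + k) (k := j + 1) (by omega)
      simpa using this
    rw [hprod, hsub]
    have hkf : (k.factorial : ℝ) ≠ 0 := by exact_mod_cast k.factorial_ne_zero
    have hjkf : ((j + 1 + k).factorial : ℝ) ≠ 0 := by
      exact_mod_cast (j + 1 + k).factorial_ne_zero
    have hmf : ((m - 2 * k).factorial : ℝ) ≠ 0 := by
      exact_mod_cast (m - 2 * k).factorial_ne_zero
    have hpow : y ^ (j + 1 + k) = y ^ (j + 1) * y ^ k := by rw [pow_add]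
    generalize hd : (((j + 1 + k).descFactorial (j + 1) : ℕ) : ℝ) = d at hfac ⊢
    rw [hpow]
    field_simp
    linear_combination hfac
  · have hneg : ((n : ℤ) - 2 * ((j : ℤ) + 1)) < 0 := by push_cast; omega
    rw [Zdim_neg y hneg, mul_zero]
    apply Finset.sum_eq_zero
    intro i hi
    simp only [Finset.mem_range] at hi
    have : i ∈ Finset.range (j + 1) := by simp only [Finset.mem_range]; omega
    rw [Finset.prod_eq_zero this (by ring)]
    simp

lemma prodE (y : ℝ) (hy : 0 < y) (n : ℕ) (j : ℕ) :
    ∏ l ∈ Finset.range (j + 1), Edim y ((n : ℤ) - 2 * (l : ℤ))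
      = y ^ (j + 1) * Zdim y ((n : ℤ) - 2 * ((j : ℤ) + 1)) / Zdim y (n : ℤ) := by
  induction j with
  | zero =>
    simp only [Finset.prod_range_one, Edim, pow_one]
    norm_num
  | succ j ih =>
    rw [Finset.prod_range_succ, ih, Edim]
    have harg : ((n : ℤ) - 2 * ((j + 1 : ℕ) : ℤ)) = (n : ℤ) - 2 * ((j : ℤ) + 1) := by
      push_cast; ring
    have harg2 : ((n : ℤ) - 2 * ((j + 1 : ℕ) : ℤ) - 2) = (n : ℤ) - 2 * (((j + 1 : ℕ) : ℤ) + 1) := by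
      ring
    rw [harg2, harg]
    set a := Zdim y ((n : ℤ) - 2 * ((j : ℤ) + 1)) with ha
    set b := Zdim y ((n : ℤ) - 2 * ((j : ℤ) + 1) - 2) with hb
    set c := Zdim y (n : ℤ) with hc
    have hb' : ((n : ℤ) - 2 * (((j + 1 : ℕ) : ℤ) + 1)) = (n : ℤ) - 2 * ((j : ℤ) + 1) - 2 := by
      push_cast; ring
    rw [hb', ← hb]
    by_cases haz : a = 0
    · have hlt : ((n : ℤ) - 2 * ((j : ℤ) + 1)) < 0 := by
        by_contra h
        exact absurd haz (Zdim_pos y hy (by omega)).ne'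
      have hbz : b = 0 := Zdim_neg y (by omega)
      rw [haz, hbz]
      ring
    · field_simp
      have ha1 : a * a⁻¹ = 1 := mul_inv_cancel₀ haz
      linear_combination (0 : ℝ) * ha1
  
/-- Lemma `hmom` / Theorem `mom`: the factorial-moment
identity `Σ_i i(i-1)⋯(i-j)·yⁱ/((n-2i)!i!) = y^{j+1}·Z_{n-2(j+1)}`, and hence
`Σ_i P_{j+1}(i)·μⁿ(i) = E_{n-2j}·E_{n-2(j-1)}⋯E_{n-2}·E_n`. -/
theorem dimer_factorial_moments
    (y : ℝ) (hy : 0 < y) (n j : ℕ) :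
    (∑ i ∈ Finset.range (n / 2 + 1),
        (∏ l ∈ Finset.range (j + 1), ((i : ℝ) - (l : ℝ)))
          * y ^ i / ((n - 2 * i).factorial * i.factorial)
      = y ^ (j + 1) * Zdim y ((n : ℤ) - 2 * ((j : ℤ) + 1))) ∧
    (∑ i ∈ Finset.range (n / 2 + 1),
        (∏ l ∈ Finset.range (j + 1), ((i : ℝ) - (l : ℝ))) * muDim y n i
      = ∏ l ∈ Finset.range (j + 1), Edim y ((n : ℤ) - 2 * (l : ℤ))) := by
  refine ⟨hmom y hy n j, ?_⟩
  rw [prodE y hy n j, ← hmom y hy n j, Finset.sum_div]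
  apply Finset.sum_congr rfl
  intro i _
  rw [muDim, div_div]
  ring
end
end
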